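/- arXiv:1508.01726 — 11 statements merged into one kernel-verified Lean document; each statement's English description precedes it below -/
import Mathlib

section
/- Let p and q be distinct primes and set ξ = log q / log p (a positive irrational real number). Let (a,b) ∈ 𝒩 and α = p^a/q^b. Suppose A = (p^{a₁}/q^{b₁}, …, p^{a_N}/q^{b_N}) is a factorization of α and t > 1 is a real number such that f_A(t) ≤ f_B(t) for every factorization B ∈ ℱ(α). Then for every 1 ≤ n ≤ N, either (aₙ,bₙ) ∈ 𝒢 ∩ 𝒰₂(ξ) or (aₙ,bₙ) ∈ 𝒢 ∩ ℒ₁(ξ). -/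
open Real Finset

/-- `𝒩` is encoded by pairs `x : ℕ × ℕ` with `x ≠ (0,0)`.
The upper set `𝒰(ξ) = {(a,b) ∈ 𝒩 : a > bξ}`. -/
def Uset (ξ : ℝ) : Set (ℕ × ℕ) := {x | x ≠ (0, 0) ∧ (x.2 : ℝ) * ξ < (x.1 : ℝ)}

/-- The lower set `ℒ(ξ) = {(a,b) ∈ 𝒩 : a < bξ}`. -/
def Lset (ξ : ℝ) : Set (ℕ × ℕ) := {x | x ≠ (0, 0) ∧ (x.1 : ℝ) < (x.2 : ℝ) * ξ}

/-- `𝒢 = {(a,b) ∈ 𝒩 : gcd(a,b) = 1}`. -/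
def Gset : Set (ℕ × ℕ) := {x | x ≠ (0, 0) ∧ Nat.Coprime x.1 x.2}

/-- `𝒰₁(ξ)`: elements `(a,b)` of `𝒰(ξ)` with `a/b ≤ m/n` (by cross multiplication)
for every `(m,n) ∈ 𝒰(ξ)` with `m ≤ a`. -/
def U1 (ξ : ℝ) : Set (ℕ × ℕ) :=
  {x | x ∈ Uset ξ ∧ ∀ y ∈ Uset ξ, y.1 ≤ x.1 → x.1 * y.2 ≤ y.1 * x.2}

/-- `𝒰₂(ξ)`: elements `(a,b)` of `𝒰(ξ)` with `a/b ≤ m/n` for every `(m,n) ∈ 𝒰(ξ)`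
with `n ≤ b`. -/
def U2 (ξ : ℝ) : Set (ℕ × ℕ) :=
  {x | x ∈ Uset ξ ∧ ∀ y ∈ Uset ξ, y.2 ≤ x.2 → x.1 * y.2 ≤ y.1 * x.2}

/-- `ℒ₁(ξ)`: elements `(a,b)` of `ℒ(ξ)` with `a/b ≥ m/n` for every `(m,n) ∈ ℒ(ξ)`
with `m ≤ a`. -/
def L1 (ξ : ℝ) : Set (ℕ × ℕ) :=
  {x | x ∈ Lset ξ ∧ ∀ y ∈ Lset ξ, y.1 ≤ x.1 → y.1 * x.2 ≤ x.1 * y.2}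

/-- `ℒ₂(ξ)`: elements `(a,b)` of `ℒ(ξ)` with `a/b ≥ m/n` for every `(m,n) ∈ ℒ(ξ)`
with `n ≤ b`. -/
def L2 (ξ : ℝ) : Set (ℕ × ℕ) :=
  {x | x ∈ Lset ξ ∧ ∀ y ∈ Lset ξ, y.2 ≤ x.2 → y.1 * x.2 ≤ x.1 * y.2}

/-- `(a,b)` is an upper or lower best approximation for `ξ`. -/
def BestApprox (ξ : ℝ) (x : ℕ × ℕ) : Prop :=
  x ∈ Gset ∩ U1 ξ ∨ x ∈ Gset ∩ L2 ξ

/-- A factorization of a positive rational `α ≠ 1`: a tuple of fractions `r n / s n` of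
positive integers, none equal to `1`, with `gcd (r m) (s n) = 1` for all `m, n`, whose
product is `α`. -/
def IsFactorization (α : ℚ) {N : ℕ} (r s : Fin N → ℕ) : Prop :=
  (∀ n, 0 < r n) ∧ (∀ n, 0 < s n) ∧ (∀ n, (r n : ℚ) / (s n : ℚ) ≠ 1) ∧
    (∀ m n, Nat.Coprime (r m) (s n)) ∧ (∏ n, (r n : ℚ) / (s n : ℚ)) = α

/-- The measure function `f_A(t) = (Σₙ m(rₙ/sₙ)^t)^{1/t}` of a factorization, where
`m(rₙ/sₙ) = log max(rₙ, sₙ)`. -/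
noncomputable def fmeas {N : ℕ} (r s : Fin N → ℕ) (t : ℝ) : ℝ :=
  (∑ n, (Real.log ((max (r n) (s n) : ℕ) : ℝ)) ^ t) ^ (1 / t)


/-! Encode the factor `p ^ i / q ^ j` by its exponent pair `(i, j)`; its Mahler measure is
`log p * height ξ (i, j)` with `height ξ (i, j) = max i (j ξ)`. Since `t > 1`, `u ↦ u ^ t` is
strictly superadditive, so if a factor of a minimal factorization split as `y + z` into nonzero
pairs with `height y + height z ≤ height (i, j)`, replacing it by the two factors `y, z` would
lower `f_A(t)`. A pair without such a split is primitive (split `d • x₀` as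
`x₀ + (d - 1) • x₀`). A pair `(a, b)` above the line `i = j ξ` with a better upper
approximation `(m, n)`, `n ≤ b`, splits as `(m, n) + (a - m, b - n)` with both parts above the
line, where `height` is additive; symmetrically below the line. -/

noncomputable def height (ξ : ℝ) (x : ℕ × ℕ) : ℝ := max (x.1 : ℝ) (x.2 * ξ)

def StrictlySubadditiveAt (ξ : ℝ) (x : ℕ × ℕ) : Prop :=
  ∀ y z : ℕ × ℕ, y ≠ 0 → z ≠ 0 → y + z = x → height ξ x < height ξ y + height ξ z

lemma height_nonneg (ξ : ℝ) (x : ℕ × ℕ) : 0 ≤ height ξ x :=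
  le_max_of_le_left (Nat.cast_nonneg _)

section Height

variable {ξ : ℝ}

lemma height_pos (hξ : 0 < ξ) {x : ℕ × ℕ} (hx : x ≠ 0) : 0 < height ξ x := by
  rcases Nat.eq_zero_or_pos x.1 with h1 | h1
  · have h2 : 0 < x.2 := Nat.pos_of_ne_zero fun h2 => hx (Prod.ext h1 h2)
    exact lt_max_of_lt_right (by positivity)
  · exact lt_max_of_lt_left (by exact_mod_cast h1)

lemma height_nsmul (c : ℕ) (x : ℕ × ℕ) : height ξ (c • x) = c * height ξ x := by
  simp only [height, Prod.smul_fst, Prod.smul_snd, smul_eq_mul, Nat.cast_mul]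
  rw [mul_max_of_nonneg _ _ (Nat.cast_nonneg c), mul_assoc]

lemma height_of_mem_Uset {x : ℕ × ℕ} (hx : x ∈ Uset ξ) : height ξ x = x.1 :=
  max_eq_left hx.2.le

lemma height_of_mem_Lset {x : ℕ × ℕ} (hx : x ∈ Lset ξ) : height ξ x = x.2 * ξ :=
  max_eq_right hx.2.le

end Height

namespace StrictlySubadditiveAt

variable {ξ : ℝ} {x : ℕ × ℕ}

lemma coprime (hx : x ≠ 0) (h : StrictlySubadditiveAt ξ x) :
    Nat.Coprime x.1 x.2 := by
  set d := Nat.gcd x.1 x.2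
  set x₀ : ℕ × ℕ := (x.1 / d, x.2 / d)
  have hx₀ : d • x₀ = x := Prod.ext (Nat.mul_div_cancel' (Nat.gcd_dvd_left _ _))
    (Nat.mul_div_cancel' (Nat.gcd_dvd_right _ _))
  have hd : d ≠ 0 := fun hd => hx (by simpa [hd] using hx₀.symm)
  have hx₀0 : x₀ ≠ 0 := fun h0 => hx (by rw [← hx₀, h0, smul_zero])
  by_contra hd1
  have hsplit : x₀ + (d - 1) • x₀ = x := by
    rw [← hx₀, ← succ_nsmul', Nat.sub_add_cancel (Nat.pos_of_ne_zero hd)]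
  have hlt := h x₀ ((d - 1) • x₀) hx₀0
    (smul_ne_zero (by omega) hx₀0) hsplit
  rw [← hx₀, height_nsmul, height_nsmul, Nat.cast_sub (by omega), Nat.cast_one] at hlt
  linarith

lemma mem_U2 (h : StrictlySubadditiveAt ξ x) (hx : x ∈ Uset ξ) : x ∈ U2 ξ := by
  refine ⟨hx, fun y hy hyx => ?_⟩
  by_contra! hlt
  have hn : 0 < y.2 := Nat.pos_of_ne_zero fun hn => by simp [hn] at hlt
  have hξy : (y.2 : ℝ) * ξ < y.1 := hy.2
  have hlt' : (y.1 : ℝ) * x.2 < x.1 * y.2 := by exact_mod_cast hlt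
  have hyx' : (y.2 : ℝ) ≤ x.2 := by exact_mod_cast hyx
  -- `ξ < y.1 / y.2 < x.1 / x.2` bounds the `ξ`-part of `x - y` by the `1`-part
  have hkey : (y.1 : ℝ) + (x.2 - y.2) * ξ < x.1 := by
    have hn' : (0 : ℝ) < y.2 := by exact_mod_cast hn
    nlinarith [mul_le_mul_of_nonneg_left hξy.le (sub_nonneg.2 hyx')]
  have hm : y.1 < x.1 := by
    have : (y.1 : ℝ) < x.1 := by nlinarith [sub_nonneg.2 hyx']
    exact_mod_cast this
  set z : ℕ × ℕ := (x.1 - y.1, x.2 - y.2)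
  have hz : z ∈ Uset ξ := ⟨fun h0 => by simp [z] at h0; omega, by
    simp only [z, Nat.cast_sub hm.le, Nat.cast_sub hyx]; linarith⟩
  have hyz := h y z hy.1 hz.1 (Prod.ext (by simp [z]; omega) (by simp [z]; omega))
  rw [height_of_mem_Uset hx, height_of_mem_Uset hy, height_of_mem_Uset hz,
    Nat.cast_sub hm.le] at hyz
  linarith

lemma mem_L1 (hξ : 0 < ξ) (h : StrictlySubadditiveAt ξ x) (hx : x ∈ Lset ξ) : x ∈ L1 ξ := by
  refine ⟨hx, fun y hy hyx => ?_⟩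
  by_contra! hlt
  have hm : 0 < y.1 := Nat.pos_of_ne_zero fun hm => by simp [hm] at hlt
  have hξy : (y.1 : ℝ) < y.2 * ξ := hy.2
  have hlt' : (x.1 : ℝ) * y.2 < y.1 * x.2 := by exact_mod_cast hlt
  have hyx' : (y.1 : ℝ) ≤ x.1 := by exact_mod_cast hyx
  -- `x.1 / x.2 < y.1 / y.2 < ξ` bounds the `1`-part of `x - y` by the `ξ`-part
  have hkey : (x.1 - y.1 : ℝ) + y.2 * ξ < x.2 * ξ := by
    have hm' : (0 : ℝ) < y.1 := by exact_mod_cast hm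
    nlinarith [mul_le_mul_of_nonneg_left hξy.le (sub_nonneg.2 hyx'),
      mul_lt_mul_of_pos_right hlt' hξ]
  have hn : y.2 < x.2 := by
    have : (y.2 : ℝ) < x.2 := by nlinarith [sub_nonneg.2 hyx']
    exact_mod_cast this
  set z : ℕ × ℕ := (x.1 - y.1, x.2 - y.2)
  have hz : z ∈ Lset ξ := ⟨fun h0 => by simp [z] at h0; omega, by
    simp only [z, Nat.cast_sub hyx, Nat.cast_sub hn.le]; linarith⟩
  have hyz := h y z hy.1 hz.1 (Prod.ext (by simp [z]; omega) (by simp [z]; omega))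
  rw [height_of_mem_Lset hx, height_of_mem_Lset hy, height_of_mem_Lset hz,
    Nat.cast_sub hn.le] at hyz
  linarith

end StrictlySubadditiveAt

lemma Real.rpow_add_rpow_lt_add_rpow {u v t : ℝ} (hu : 0 < u) (hv : 0 < v) (ht : 1 < t) :
    u ^ t + v ^ t < (u + v) ^ t := by
  have hs : 0 < u + v := by positivity
  have hlt : ∀ w, 0 < w → w < u + v → w ^ t < w / (u + v) * (u + v) ^ t := fun w hw hws => by
    have := rpow_lt_self_of_lt_one (div_pos hw hs) ((div_lt_one hs).2 hws) ht
    rwa [div_rpow hw.le hs.le, div_lt_iff₀ (by positivity)] at this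
  have := add_lt_add (hlt u hu (by linarith)) (hlt v hv (by linarith))
  rwa [← add_mul, ← add_div, div_self hs.ne', one_mul] at this

lemma Fin.sum_comp_cons_update {α M : Type*} [AddCommMonoid M] {N : ℕ} (f : α → M)
    (X : Fin N → α) (k : Fin N) (y z : α) :
    ∑ n, f ((Fin.cons y (Function.update X k z) : Fin (N + 1) → α) n) + f (X k) =
      f y + f z + ∑ n, f (X n) := by
  have hcomp : ∀ n, f (Function.update X k z n) = Function.update (f ∘ X) k (f z) n :=
    Function.apply_update (fun _ => f) X k z
  rw [Fin.sum_univ_succ]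
  simp only [Fin.cons_zero, Fin.cons_succ]
  rw [Fintype.sum_congr _ _ hcomp, sum_update_of_mem (mem_univ k),
    ← add_sum_erase _ _ (mem_univ k), sdiff_singleton_eq_erase]
  simp only [Function.comp_apply]
  abel

lemma prod_natCast_pow_div_pow (p q : ℕ) {M : ℕ} (X : Fin M → ℕ × ℕ) :
    ∏ n, ((p ^ (X n).1 : ℕ) : ℚ) / ((q ^ (X n).2 : ℕ) : ℚ) =
      (p : ℚ) ^ (∑ n, X n).1 / (q : ℚ) ^ (∑ n, X n).2 := by
  push_cast
  rw [prod_div_distrib, prod_pow_eq_pow_sum, prod_pow_eq_pow_sum, Prod.fst_sum, Prod.snd_sum]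

section Factorization

variable {p q : ℕ}

lemma eq_zero_of_prime_pow_eq_pow (hp : p.Prime) (hq : q.Prime) (hpq : p ≠ q) {i j : ℕ}
    (h : p ^ i = q ^ j) : i = 0 ∧ j = 0 := by
  have hcop := Nat.Coprime.pow i j ((Nat.coprime_primes hp hq).2 hpq)
  rw [h, Nat.coprime_self, Nat.pow_eq_one] at hcop
  have hj : j = 0 := hcop.resolve_left hq.one_lt.ne'
  rw [hj, pow_zero, Nat.pow_eq_one] at h
  exact ⟨h.resolve_left hp.one_lt.ne', hj⟩

lemma natCast_ne_mul_log_div_log (hp : p.Prime) (hq : q.Prime) (hpq : p ≠ q) {x : ℕ × ℕ}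
    (hx : x ≠ 0) :
    (x.1 : ℝ) ≠ x.2 * (log q / log p) := by
  intro h
  have hlogp : 0 < log p := log_pos (by exact_mod_cast hp.one_lt)
  have hlog : log ((p : ℝ) ^ x.1) = log ((q : ℝ) ^ x.2) := by
    rw [log_pow, log_pow, h]
    field_simp
  have hpow : ((p ^ x.1 : ℕ) : ℝ) = (q ^ x.2 : ℕ) := by
    push_cast
    exact log_injOn_pos (Set.mem_Ioi.2 (pow_pos (by exact_mod_cast hp.pos) _))
      (Set.mem_Ioi.2 (pow_pos (by exact_mod_cast hq.pos) _)) hlog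
  obtain ⟨h1, h2⟩ := eq_zero_of_prime_pow_eq_pow hp hq hpq (by exact_mod_cast hpow)
  exact hx (Prod.ext h1 h2)

lemma isFactorization_pow (hp : p.Prime) (hq : q.Prime) (hpq : p ≠ q) {M : ℕ}
    {X : Fin M → ℕ × ℕ} (hX : ∀ n, X n ≠ 0) :
    IsFactorization ((p : ℚ) ^ (∑ n, X n).1 / (q : ℚ) ^ (∑ n, X n).2)
      (fun n => p ^ (X n).1) (fun n => q ^ (X n).2) := by
  refine ⟨fun n => pow_pos hp.pos _, fun n => pow_pos hq.pos _, fun n h => hX n ?_,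
    fun _ _ => Nat.Coprime.pow _ _ ((Nat.coprime_primes hp hq).2 hpq),
    prod_natCast_pow_div_pow p q X⟩
  have hq0 : ((q ^ (X n).2 : ℕ) : ℚ) ≠ 0 := Nat.cast_ne_zero.2 (pow_ne_zero _ hq.ne_zero)
  rw [div_eq_one_iff_eq hq0, Nat.cast_inj] at h
  obtain ⟨h1, h2⟩ := eq_zero_of_prime_pow_eq_pow hp hq hpq h
  exact Prod.ext h1 h2

lemma ne_zero_of_isFactorization {α : ℚ} {M : ℕ} {X : Fin M → ℕ × ℕ}
    (h : IsFactorization α (fun n => p ^ (X n).1) (fun n => q ^ (X n).2)) (n : Fin M) :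
    X n ≠ 0 := by
  intro h0
  apply h.2.2.1 n
  simp [h0]

lemma log_natCast_max_pow {ξ : ℝ} (hp : 1 < p) (hq : 0 < q) (hξ : ξ = log q / log p)
    (x : ℕ × ℕ) : log ((max (p ^ x.1) (q ^ x.2) : ℕ) : ℝ) = log p * height ξ x := by
  have hlogp : 0 < log p := log_pos (by exact_mod_cast hp)
  rw [Nat.cast_max, strictMonoOn_log.monotoneOn.map_max (by simp; positivity)
    (by simp; positivity)]
  push_cast
  rw [log_pow, log_pow, height, mul_max_of_nonneg _ _ hlogp.le, hξ]
  congr 1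
  · ring
  · field_simp

lemma fmeas_pow_eq {ξ : ℝ} (hp : 1 < p) (hq : 0 < q) (hξ : ξ = log q / log p) {M : ℕ}
    (X : Fin M → ℕ × ℕ) (t : ℝ) :
    fmeas (fun n => p ^ (X n).1) (fun n => q ^ (X n).2) t =
      (∑ n, (log p * height ξ (X n)) ^ t) ^ (1 / t) := by
  simp only [fmeas, log_natCast_max_pow hp hq hξ]

lemma cons_update_ne_zero {N : ℕ} {X : Fin N → ℕ × ℕ} (hX : ∀ n, X n ≠ 0) {k : Fin N}
    {y z : ℕ × ℕ} (hy : y ≠ 0) (hz : z ≠ 0) (n : Fin (N + 1)) :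
    (Fin.cons y (Function.update X k z) : Fin (N + 1) → ℕ × ℕ) n ≠ 0 := by
  refine Fin.cases hy (fun n => ?_) n
  rcases eq_or_ne n k with rfl | hn
  · simpa only [Fin.cons_succ, Function.update_self] using hz
  · simpa only [Fin.cons_succ, Function.update_of_ne hn] using hX n

lemma sum_cons_update_of_add_eq {N : ℕ} (X : Fin N → ℕ × ℕ) {k : Fin N} {y z : ℕ × ℕ}
    (hyz : y + z = X k) :
    ∑ n, (Fin.cons y (Function.update X k z) : Fin (N + 1) → ℕ × ℕ) n = ∑ n, X n := by
  have := Fin.sum_comp_cons_update id X k y z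
  simp only [id] at this
  rw [hyz, add_comm (X k)] at this
  exact add_right_cancel this

lemma fmeas_cons_update_lt {ξ : ℝ} (hp : 1 < p) (hq : 1 < q) (hξ : ξ = log q / log p)
    {t : ℝ} (ht : 1 < t) {N : ℕ} (X : Fin N → ℕ × ℕ) (k : Fin N) {y z : ℕ × ℕ}
    (hy : y ≠ 0) (hz : z ≠ 0) (hle : height ξ y + height ξ z ≤ height ξ (X k)) :
    let X' : Fin (N + 1) → ℕ × ℕ := Fin.cons y (Function.update X k z)
    fmeas (fun n => p ^ (X' n).1) (fun n => q ^ (X' n).2) t <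
      fmeas (fun n => p ^ (X n).1) (fun n => q ^ (X n).2) t := by
  intro X'
  have hlogp : 0 < log p := log_pos (by exact_mod_cast hp)
  have hξ0 : 0 < ξ := hξ ▸ div_pos (log_pos (by exact_mod_cast hq)) hlogp
  set g : ℕ × ℕ → ℝ := fun w => (log p * height ξ w) ^ t
  have hg : ∀ w, 0 ≤ g w := fun w => rpow_nonneg (mul_nonneg hlogp.le (height_nonneg ξ w)) _
  have hgt : g y + g z < g (X k) := calc
    g y + g z < (log p * height ξ y + log p * height ξ z) ^ t :=
      rpow_add_rpow_lt_add_rpow (mul_pos hlogp (height_pos hξ0 hy))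
        (mul_pos hlogp (height_pos hξ0 hz)) ht
    _ ≤ g (X k) := by
      rw [← mul_add]
      exact rpow_le_rpow (mul_nonneg hlogp.le (add_nonneg (height_nonneg ξ y)
        (height_nonneg ξ z))) (mul_le_mul_of_nonneg_left hle hlogp.le) (by linarith)
  have hsplit := Fin.sum_comp_cons_update g X k y z
  rw [fmeas_pow_eq hp (by omega) hξ, fmeas_pow_eq hp (by omega) hξ]
  exact rpow_lt_rpow (sum_nonneg fun n _ => hg _) (by linarith) (by positivity)

theorem strictlySubadditiveAt_of_forall_fmeas_le (hp : p.Prime) (hq : q.Prime) (hpq : p ≠ q)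
    {ξ : ℝ} (hξ : ξ = log q / log p) {t : ℝ} (ht : 1 < t) {N : ℕ} {X : Fin N → ℕ × ℕ}
    (hX : ∀ n, X n ≠ 0)
    (hmin : ∀ (M : ℕ) (r s : Fin M → ℕ),
      IsFactorization ((p : ℚ) ^ (∑ n, X n).1 / (q : ℚ) ^ (∑ n, X n).2) r s →
      fmeas (fun n => p ^ (X n).1) (fun n => q ^ (X n).2) t ≤ fmeas r s t)
    (k : Fin N) : StrictlySubadditiveAt ξ (X k) := by
  intro y z hy hz hyz
  by_contra! hle
  have hfact := isFactorization_pow hp hq hpq (cons_update_ne_zero (k := k) hX hy hz)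
  rw [sum_cons_update_of_add_eq X hyz] at hfact
  exact (fmeas_cons_update_lt hp.one_lt hq.one_lt hξ ht X k hy hz hle).not_ge
    (hmin _ _ _ hfact)

end Factorization

theorem stmt_0_general (p q : ℕ) (hp : p.Prime) (hq : q.Prime) (hpq : p ≠ q)
    (ξ : ℝ) (hξ : ξ = Real.log q / Real.log p)
    (a b : ℕ)
    (N : ℕ) (A B : Fin N → ℕ)
    (hfact : IsFactorization ((p : ℚ) ^ a / (q : ℚ) ^ b)
      (fun n => p ^ A n) (fun n => q ^ B n))
    (t : ℝ) (ht : 1 < t)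
    (hmin : ∀ (M : ℕ) (r s : Fin M → ℕ),
      IsFactorization ((p : ℚ) ^ a / (q : ℚ) ^ b) r s →
      fmeas (fun n => p ^ A n) (fun n => q ^ B n) t ≤ fmeas r s t) :
    ∀ n : Fin N, (A n, B n) ∈ Gset ∩ U2 ξ ∨ (A n, B n) ∈ Gset ∩ L1 ξ := by
  set X : Fin N → ℕ × ℕ := fun n => (A n, B n)
  have hX : ∀ n, X n ≠ 0 := ne_zero_of_isFactorization hfact
  have hα : (p : ℚ) ^ a / (q : ℚ) ^ b = (p : ℚ) ^ (∑ n, X n).1 / (q : ℚ) ^ (∑ n, X n).2 :=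
    hfact.2.2.2.2.symm.trans (prod_natCast_pow_div_pow p q X)
  rw [hα] at hmin
  have hξ0 : 0 < ξ :=
    hξ ▸ div_pos (log_pos (by exact_mod_cast hq.one_lt)) (log_pos (by exact_mod_cast hp.one_lt))
  intro n
  have hsub := strictlySubadditiveAt_of_forall_fmeas_le hp hq hpq hξ ht hX hmin n
  have hG : X n ∈ Gset := ⟨hX n, hsub.coprime (hX n)⟩
  rcases (hξ ▸ natCast_ne_mul_log_div_log hp hq hpq (hX n)).lt_or_gt with h | h
  · exact Or.inr ⟨hG, hsub.mem_L1 hξ0 ⟨hX n, h⟩⟩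
  · exact Or.inl ⟨hG, hsub.mem_U2 ⟨hX n, h⟩⟩

/-- Theorem `FirstAxioms`: if a factorization
`(p^{a_1}/q^{b_1}, ..., p^{a_N}/q^{b_N})` of `α = p^a/q^b` attains the infimum in
`m_t(α)` over `ℱ(α)` for some `t > 1`, then each `(aₙ,bₙ)` lies in `𝒢 ∩ 𝒰₂(ξ)` or
`𝒢 ∩ ℒ₁(ξ)`, where `ξ = log q / log p`. -/
theorem stmt_0 (p q : ℕ) (hp : p.Prime) (hq : q.Prime) (hpq : p ≠ q)
    (ξ : ℝ) (hξ : ξ = Real.log q / Real.log p)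
    (a b : ℕ) (hab : (a, b) ≠ (0, 0))
    (N : ℕ) (A B : Fin N → ℕ)
    (hfact : IsFactorization ((p : ℚ) ^ a / (q : ℚ) ^ b)
      (fun n => p ^ A n) (fun n => q ^ B n))
    (t : ℝ) (ht : 1 < t)
    (hmin : ∀ (M : ℕ) (r s : Fin M → ℕ),
      IsFactorization ((p : ℚ) ^ a / (q : ℚ) ^ b) r s →
      fmeas (fun n => p ^ A n) (fun n => q ^ B n) t ≤ fmeas r s t) :
    ∀ n : Fin N, (A n, B n) ∈ Gset ∩ U2 ξ ∨ (A n, B n) ∈ Gset ∩ L1 ξ :=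
  stmt_0_general p q hp hq hpq ξ hξ a b N A B hfact t ht hmin
end

section
/- Let p and q be distinct primes and set ξ = log q / log p (a positive irrational real number). Assume (a,b) is an upper or lower best approximation for ξ, and set α = p^a/q^b. Suppose A = (p^{a₁}/q^{b₁}, …, p^{a_N}/q^{b_N}) is a factorization of α and t > 1 is a real number such that f_A(t) ≤ f_B(t) for every factorization B ∈ ℱ(α). Then for every 1 ≤ n ≤ N, (aₙ,bₙ) is an upper or lower best approximation for ξ, i.e., (aₙ,bₙ) ∈ 𝒢 ∩ 𝒰₁(ξ) or (aₙ,bₙ) ∈ 𝒢 ∩ ℒ₂(ξ). -/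
open Real Finset

/-! Auxiliary development -/

/-- weight of a pair -/
noncomputable def nuW (L Q : ℝ) (x : ℕ × ℕ) : ℝ := max ((x.1 : ℝ) * L) ((x.2 : ℝ) * Q)

lemma nuW_nonneg {L Q : ℝ} (hL : 0 ≤ L) (hQ : 0 ≤ Q) (x : ℕ × ℕ) : 0 ≤ nuW L Q x :=
  le_max_of_le_left (by positivity)

lemma nuW_swap (L Q : ℝ) (x : ℕ × ℕ) : nuW Q L (x.2, x.1) = nuW L Q x := max_comm _ _

lemma nuW_pos {L Q : ℝ} (hL : 0 < L) (hQ : 0 < Q) {x : ℕ × ℕ} (hx : x ≠ (0, 0)) :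
    0 < nuW L Q x := by
  rcases Nat.eq_zero_or_pos x.1 with h1 | h1
  · rcases Nat.eq_zero_or_pos x.2 with h2 | h2
    · exact absurd (Prod.ext h1 h2) hx
    · exact lt_max_of_lt_right (by positivity)
  · exact lt_max_of_lt_left (by positivity)

/-- superadditivity of rpow, strict -/
lemma rpow_superadd {s1 s2 t : ℝ} (h1 : 0 < s1) (h2 : 0 < s2) (ht : 1 < t) :
    s1 ^ t + s2 ^ t < (s1 + s2) ^ t := by
  have hs : (0:ℝ) < s1 + s2 := by linarith
  have ht1 : (0:ℝ) < t - 1 := by linarith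
  have e1 : s1 ^ t = s1 * s1 ^ (t - 1) := by
    nth_rewrite 1 [show t = 1 + (t - 1) by ring]
    rw [Real.rpow_add h1, Real.rpow_one]
  have e2 : s2 ^ t = s2 * s2 ^ (t - 1) := by
    nth_rewrite 1 [show t = 1 + (t - 1) by ring]
    rw [Real.rpow_add h2, Real.rpow_one]
  have l1 : s1 ^ (t - 1) < (s1 + s2) ^ (t - 1) :=
    Real.rpow_lt_rpow h1.le (by linarith) ht1
  have l2 : s2 ^ (t - 1) < (s1 + s2) ^ (t - 1) :=
    Real.rpow_lt_rpow h2.le (by linarith) ht1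
  have etot : (s1 + s2) ^ t = (s1 + s2) * (s1 + s2) ^ (t - 1) := by
    nth_rewrite 1 [show t = 1 + (t - 1) by ring]
    rw [Real.rpow_add hs, Real.rpow_one]
  calc s1 ^ t + s2 ^ t = s1 * s1 ^ (t-1) + s2 * s2 ^ (t-1) := by rw [e1, e2]
    _ < s1 * (s1+s2) ^ (t-1) + s2 * (s1+s2) ^ (t-1) := by
        have := mul_lt_mul_of_pos_left l1 h1
        have := mul_lt_mul_of_pos_left l2 h2
        linarith
    _ = (s1 + s2) ^ t := by rw [etot]; ring

section SumHelpers

variable {α : Type*} {M : Type*} [AddCommMonoid M]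

lemma sum_comp_eq_add {N : ℕ} (G : Fin N → α) (φ : α → M) (k : Fin N) :
    ∑ i, φ (G i) = φ (G k) + ∑ i ∈ Finset.univ \ {k}, φ (G i) := by
  rw [show (Finset.univ \ {k} : Finset (Fin N)) = Finset.univ.erase k from (Finset.erase_eq _ _).symm]
  exact (Finset.add_sum_erase _ _ (Finset.mem_univ k)).symm

lemma sum_comp_update {N : ℕ} (G : Fin N → α) (φ : α → M) (k : Fin N) (y : α) :
    ∑ i, φ (Function.update G k y i) = φ y + ∑ i ∈ Finset.univ \ {k}, φ (G i) := by
  have : (fun i => φ (Function.update G k y i)) = Function.update (fun i => φ (G i)) k (φ y) := by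
    funext i
    rcases eq_or_ne i k with rfl | h
    · simp
    · simp [Function.update_of_ne h]
  rw [show ∑ i, φ (Function.update G k y i) = ∑ i, Function.update (fun i => φ (G i)) k (φ y) i
      from by rw [← this]]
  exact Finset.sum_update_of_mem (Finset.mem_univ k) _ _

lemma sum_comp_snoc {N : ℕ} (G : Fin N → α) (φ : α → M) (z : α) :
    ∑ i : Fin (N + 1), φ ((Fin.snoc G z : Fin (N+1) → α) i) = ∑ i : Fin N, φ (G i) + φ z := by
  rw [Fin.sum_univ_castSucc]
  simp

end SumHelpers
section SumHelpers2

variable {α : Type*} {M : Type*} [AddCommMonoid M]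

lemma sum_comp_eq_add' {N : ℕ} (G : Fin N → α) (φ : α → M) {s : Finset (Fin N)} {k : Fin N}
    (hk : k ∈ s) :
    ∑ i ∈ s, φ (G i) = φ (G k) + ∑ i ∈ s \ {k}, φ (G i) := by
  rw [show (s \ {k} : Finset (Fin N)) = s.erase k from (Finset.erase_eq _ _).symm]
  exact (Finset.add_sum_erase _ _ hk).symm

lemma sum_comp_update' {N : ℕ} (G : Fin N → α) (φ : α → M) {s : Finset (Fin N)} {k : Fin N}
    (hk : k ∈ s) (y : α) :
    ∑ i ∈ s, φ (Function.update G k y i) = φ y + ∑ i ∈ s \ {k}, φ (G i) := by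
  have hfun : (fun i => φ (Function.update G k y i))
      = Function.update (fun i => φ (G i)) k (φ y) := by
    funext i
    rcases eq_or_ne i k with rfl | h
    · simp
    · simp [Function.update_of_ne h]
  calc ∑ i ∈ s, φ (Function.update G k y i)
      = ∑ i ∈ s, Function.update (fun i => φ (G i)) k (φ y) i := by rw [← hfun]
    _ = φ y + ∑ i ∈ s \ {k}, φ (G i) := Finset.sum_update_of_mem hk _ _

end SumHelpers2

section Builders

variable {L Q t : ℝ} {N : ℕ}

lemma build_split (G : Fin N → ℕ × ℕ) (hG0 : ∀ i, G i ≠ (0, 0)) (k : Fin N) (y z : ℕ × ℕ)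
    (hy0 : y ≠ (0, 0)) (hz0 : z ≠ (0, 0))
    (h1 : y.1 + z.1 = (G k).1) (h2 : y.2 + z.2 = (G k).2)
    (hlt : nuW L Q y ^ t + nuW L Q z ^ t < nuW L Q (G k) ^ t) :
    ∃ (M : ℕ) (E : Fin M → ℕ × ℕ), (∀ i, E i ≠ (0, 0)) ∧
      (∑ i, (E i).1 = ∑ i, (G i).1) ∧ (∑ i, (E i).2 = ∑ i, (G i).2) ∧
      (∑ i, nuW L Q (E i) ^ t) < ∑ i, nuW L Q (G i) ^ t := by
  refine ⟨N + 1, Fin.snoc (Function.update G k y) z, ?_, ?_, ?_, ?_⟩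
  · intro i
    refine Fin.lastCases ?_ ?_ i
    · simpa using hz0
    · intro j
      simp only [Fin.snoc_castSucc]
      rcases eq_or_ne j k with rfl | h
      · simpa using hy0
      · simpa [Function.update_of_ne h] using hG0 j
  · have ha := sum_comp_snoc (Function.update G k y) (Prod.fst) z
    have hb := sum_comp_update' G (Prod.fst) (Finset.mem_univ k) y
    have hc := sum_comp_eq_add' G (Prod.fst) (Finset.mem_univ k)
    omega
  · have ha := sum_comp_snoc (Function.update G k y) (Prod.snd) z
    have hb := sum_comp_update' G (Prod.snd) (Finset.mem_univ k) y
    have hc := sum_comp_eq_add' G (Prod.snd) (Finset.mem_univ k)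
    omega
  · have ha := sum_comp_snoc (Function.update G k y) (fun x => nuW L Q x ^ t) z
    have hb := sum_comp_update' G (fun x => nuW L Q x ^ t) (Finset.mem_univ k) y
    have hc := sum_comp_eq_add' G (fun x => nuW L Q x ^ t) (Finset.mem_univ k)
    linarith

lemma build_transfer (G : Fin N → ℕ × ℕ) (hG0 : ∀ i, G i ≠ (0, 0)) (k j : Fin N) (hkj : k ≠ j)
    (y w : ℕ × ℕ) (hy0 : y ≠ (0, 0)) (hw0 : w ≠ (0, 0))
    (h1 : y.1 + w.1 = (G k).1 + (G j).1) (h2 : y.2 + w.2 = (G k).2 + (G j).2)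
    (hlt : nuW L Q y ^ t + nuW L Q w ^ t < nuW L Q (G k) ^ t + nuW L Q (G j) ^ t) :
    ∃ (M : ℕ) (E : Fin M → ℕ × ℕ), (∀ i, E i ≠ (0, 0)) ∧
      (∑ i, (E i).1 = ∑ i, (G i).1) ∧ (∑ i, (E i).2 = ∑ i, (G i).2) ∧
      (∑ i, nuW L Q (E i) ^ t) < ∑ i, nuW L Q (G i) ^ t := by
  have hkmem : k ∈ (Finset.univ \ {j} : Finset (Fin N)) := by
    simp [Finset.mem_sdiff, hkj]
  refine ⟨N, Function.update (Function.update G k y) j w, ?_, ?_, ?_, ?_⟩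
  · intro i
    rcases eq_or_ne i j with rfl | hij
    · simpa using hw0
    · rcases eq_or_ne i k with rfl | hik
      · simpa [Function.update_of_ne hij] using hy0
      · simpa [Function.update_of_ne hij, Function.update_of_ne hik] using hG0 i
  · have ha := sum_comp_update' (Function.update G k y) (Prod.fst) (Finset.mem_univ j) w
    have hb := sum_comp_update' G (Prod.fst) hkmem y
    have hc := sum_comp_eq_add' G (Prod.fst) (Finset.mem_univ j)
    have hd := sum_comp_eq_add' G (Prod.fst) hkmem
    omega
  · have ha := sum_comp_update' (Function.update G k y) (Prod.snd) (Finset.mem_univ j) w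
    have hb := sum_comp_update' G (Prod.snd) hkmem y
    have hc := sum_comp_eq_add' G (Prod.snd) (Finset.mem_univ j)
    have hd := sum_comp_eq_add' G (Prod.snd) hkmem
    omega
  · have ha := sum_comp_update' (Function.update G k y) (fun x => nuW L Q x ^ t)
      (Finset.mem_univ j) w
    have hb := sum_comp_update' G (fun x => nuW L Q x ^ t) hkmem y
    have hc := sum_comp_eq_add' G (fun x => nuW L Q x ^ t) (Finset.mem_univ j)
    have hd := sum_comp_eq_add' G (fun x => nuW L Q x ^ t) hkmem
    linarith

lemma build_merge (G : Fin N → ℕ × ℕ) (hG0 : ∀ i, G i ≠ (0, 0)) (k j : Fin N) (hkj : k ≠ j)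
    (y : ℕ × ℕ) (hy0 : y ≠ (0, 0))
    (h1 : y.1 = (G k).1 + (G j).1) (h2 : y.2 = (G k).2 + (G j).2)
    (hlt : nuW L Q y ^ t < nuW L Q (G k) ^ t + nuW L Q (G j) ^ t) :
    ∃ (M : ℕ) (E : Fin M → ℕ × ℕ), (∀ i, E i ≠ (0, 0)) ∧
      (∑ i, (E i).1 = ∑ i, (G i).1) ∧ (∑ i, (E i).2 = ∑ i, (G i).2) ∧
      (∑ i, nuW L Q (E i) ^ t) < ∑ i, nuW L Q (G i) ^ t := by
  match N, G, hG0, k, j, hkj, h1, h2, hlt with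
  | n + 1, G, hG0, k, j, hkj, h1, h2, hlt =>
  obtain ⟨k0, hk0⟩ := Fin.exists_succAbove_eq hkj
  refine ⟨n, Function.update (G ∘ j.succAbove) k0 y, ?_, ?_, ?_, ?_⟩
  · intro i
    rcases eq_or_ne i k0 with rfl | h
    · simpa using hy0
    · simpa [Function.update_of_ne h] using hG0 (j.succAbove i)
  · have ha := sum_comp_update' (G ∘ j.succAbove) (Prod.fst) (Finset.mem_univ k0) y
    have hb := sum_comp_eq_add' (G ∘ j.succAbove) (Prod.fst) (Finset.mem_univ k0)
    have hc := Fin.sum_univ_succAbove (fun i => (G i).1) j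
    simp only [Function.comp_apply, hk0] at ha hb hc
    omega
  · have ha := sum_comp_update' (G ∘ j.succAbove) (Prod.snd) (Finset.mem_univ k0) y
    have hb := sum_comp_eq_add' (G ∘ j.succAbove) (Prod.snd) (Finset.mem_univ k0)
    have hc := Fin.sum_univ_succAbove (fun i => (G i).2) j
    simp only [Function.comp_apply, hk0] at ha hb hc
    omega
  · have ha := sum_comp_update' (G ∘ j.succAbove) (fun x => nuW L Q x ^ t) (Finset.mem_univ k0) y
    have hb := sum_comp_eq_add' (G ∘ j.succAbove) (fun x => nuW L Q x ^ t) (Finset.mem_univ k0)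
    have hc := Fin.sum_univ_succAbove (fun i => nuW L Q (G i) ^ t) j
    simp only [Function.comp_apply, hk0] at ha hb hc
    linarith

end Builders
/-! Real-arithmetic forms of the best-approximation predicates -/

def RU1P (L Q : ℝ) (x : ℕ × ℕ) : Prop :=
  ((x.2 : ℝ) * Q < (x.1 : ℝ) * L) ∧
    ∀ y : ℕ × ℕ, ((y.2 : ℝ) * Q < (y.1 : ℝ) * L) → y.1 ≤ x.1 → x.1 * y.2 ≤ y.1 * x.2

def RBestP (L Q : ℝ) (x : ℕ × ℕ) : Prop :=
  (Nat.Coprime x.1 x.2 ∧ RU1P L Q x) ∨ (Nat.Coprime x.1 x.2 ∧ RU1P Q L (x.2, x.1))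

lemma RBestP_swap (L Q : ℝ) (x : ℕ × ℕ) : RBestP Q L (x.2, x.1) ↔ RBestP L Q x := by
  constructor
  · rintro (⟨hc, h⟩ | ⟨hc, h⟩)
    · exact Or.inr ⟨hc.symm, h⟩
    · exact Or.inl ⟨hc.symm, h⟩
  · rintro (⟨hc, h⟩ | ⟨hc, h⟩)
    · exact Or.inr ⟨hc.symm, h⟩
    · exact Or.inl ⟨hc.symm, h⟩

lemma nuW_left {L Q : ℝ} {x : ℕ × ℕ} (h : (x.2 : ℝ) * Q ≤ (x.1 : ℝ) * L) :
    nuW L Q x = (x.1 : ℝ) * L := max_eq_left h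

lemma nuW_right {L Q : ℝ} {x : ℕ × ℕ} (h : (x.1 : ℝ) * L ≤ (x.2 : ℝ) * Q) :
    nuW L Q x = (x.2 : ℝ) * Q := max_eq_right h

lemma side_tri {L Q : ℝ} (hirr : ∀ x : ℕ × ℕ, x ≠ (0, 0) → (x.1 : ℝ) * L ≠ (x.2 : ℝ) * Q)
    {x : ℕ × ℕ} (hx : x ≠ (0, 0)) :
    (x.2 : ℝ) * Q < (x.1 : ℝ) * L ∨ (x.1 : ℝ) * L < (x.2 : ℝ) * Q :=
  ((hirr x hx).lt_or_gt).symm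

lemma uside_fst_pos {L Q : ℝ} (hQ : 0 ≤ Q) {x : ℕ × ℕ}
    (h : (x.2 : ℝ) * Q < (x.1 : ℝ) * L) : 1 ≤ x.1 := by
  rcases Nat.eq_zero_or_pos x.1 with h0 | h0
  · exfalso
    have h1 : ((x.1 : ℕ) : ℝ) = 0 := by rw [h0]; simp
    rw [h1, zero_mul] at h
    have : (0 : ℝ) ≤ (x.2 : ℝ) * Q := by positivity
    linarith
  · exact h0

lemma lside_snd_pos {L Q : ℝ} (hL : 0 ≤ L) {x : ℕ × ℕ}
    (h : (x.1 : ℝ) * L < (x.2 : ℝ) * Q) : 1 ≤ x.2 := by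
  rcases Nat.eq_zero_or_pos x.2 with h0 | h0
  · exfalso
    have h1 : ((x.2 : ℕ) : ℝ) = 0 := by rw [h0]; simp
    rw [h1, zero_mul] at h
    have : (0 : ℝ) ≤ (x.1 : ℝ) * L := by positivity
    linarith
  · exact h0

set_option maxHeartbeats 1600000 in
/-- Main improvement step, upper-side case. -/
lemma improve_U (L Q t : ℝ) (hL : 0 < L) (hQ : 0 < Q) (ht : 1 < t)
    (hirr : ∀ x : ℕ × ℕ, x ≠ (0, 0) → (x.1 : ℝ) * L ≠ (x.2 : ℝ) * Q)
    {N : ℕ} (G : Fin N → ℕ × ℕ) (hG0 : ∀ i, G i ≠ (0, 0))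
    (hX : RBestP L Q (∑ i, (G i).1, ∑ i, (G i).2))
    (k : Fin N) (hkU : (((G k).2) : ℝ) * Q < (((G k).1) : ℝ) * L)
    (hk : ¬ RBestP L Q (G k)) :
    ∃ (M : ℕ) (E : Fin M → ℕ × ℕ), (∀ i, E i ≠ (0, 0)) ∧
      (∑ i, (E i).1 = ∑ i, (G i).1) ∧ (∑ i, (E i).2 = ∑ i, (G i).2) ∧
      (∑ i, nuW L Q (E i) ^ t) < ∑ i, nuW L Q (G i) ^ t := by
  have ht0 : (0 : ℝ) < t := by linarith
  obtain ⟨u, v, hGk⟩ : ∃ u v, G k = (u, v) := ⟨(G k).1, (G k).2, rfl⟩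
  rw [hGk] at hkU hk
  simp only at hkU
  have hupos : 1 ≤ u := uside_fst_pos hQ.le (x := (u, v)) hkU
  have huR : (1 : ℝ) ≤ (u : ℝ) := by exact_mod_cast hupos
  have hnuk : nuW L Q (G k) = (u : ℝ) * L := by rw [hGk]; exact nuW_left hkU.le
  by_cases hcop : Nat.Coprime u v
  case neg =>
    -- (A0) proportional split along the gcd
    have hd0 : Nat.gcd u v ≠ 0 := by
      intro h
      have := Nat.gcd_eq_zero_iff.mp h
      omega
    have hd1 : Nat.gcd u v ≠ 1 := hcop
    obtain ⟨u', hu'⟩ : Nat.gcd u v ∣ u := Nat.gcd_dvd_left u v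
    obtain ⟨v', hv'⟩ : Nat.gcd u v ∣ v := Nat.gcd_dvd_right u v
    obtain ⟨e, he⟩ : ∃ e, Nat.gcd u v = e + 2 := ⟨Nat.gcd u v - 2, by omega⟩
    rw [he] at hu' hv'
    have hu'pos : 1 ≤ u' := by
      rcases Nat.eq_zero_or_pos u' with h0 | h0
      · rw [h0, Nat.mul_zero] at hu'; omega
      · exact h0
    have hzpos : 0 < (e + 1) * u' := Nat.mul_pos (by omega) hu'pos
    have hsideU' : (v' : ℝ) * Q < (u' : ℝ) * L := by
      have h2 : ((v : ℕ) : ℝ) * Q < ((u : ℕ) : ℝ) * L := hkU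
      rw [hu', hv'] at h2
      push_cast at h2
      nlinarith
    have hsideZ : (((e + 1) * v' : ℕ) : ℝ) * Q < (((e + 1) * u' : ℕ) : ℝ) * L := by
      push_cast
      nlinarith
    refine build_split G hG0 k (u', v') ((e + 1) * u', (e + 1) * v') ?_ ?_ ?_ ?_ ?_
    · simp only [Ne, Prod.mk.injEq, not_and]
      omega
    · simp only [Ne, Prod.mk.injEq, not_and]
      omega
    · rw [hGk]
      show u' + (e + 1) * u' = u
      rw [hu']; ring
    · rw [hGk]
      show v' + (e + 1) * v' = v
      rw [hv']; ring
    · have n1 : nuW L Q (u', v') = (u' : ℝ) * L := nuW_left hsideU'.le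
      have n2 : nuW L Q ((e + 1) * u', (e + 1) * v') = (((e + 1) * u' : ℕ) : ℝ) * L :=
        nuW_left hsideZ.le
      rw [n1, n2, hnuk]
      have hsum : (u : ℝ) * L = (u' : ℝ) * L + (((e + 1) * u' : ℕ) : ℝ) * L := by
        rw [hu']
        push_cast
        ring
      rw [hsum]
      apply rpow_superadd _ _ ht
      · have : (0 : ℝ) < (u' : ℝ) := by exact_mod_cast hu'pos
        exact mul_pos this hL
      · have : (0 : ℝ) < (((e + 1) * u' : ℕ) : ℝ) := by exact_mod_cast hzpos
        exact mul_pos this hL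
  case pos =>
  have hnotU1 : ¬ RU1P L Q (u, v) := by
    intro h
    exact hk (Or.inl ⟨hcop, h⟩)
  have hwit : ∃ y : ℕ × ℕ, ((y.2 : ℝ) * Q < (y.1 : ℝ) * L) ∧ y.1 ≤ u ∧ y.1 * v < u * y.2 := by
    by_contra hno
    push_neg at hno
    refine hnotU1 ⟨hkU, fun y hy hle => ?_⟩
    exact hno y hy hle
  obtain ⟨⟨m, n⟩, hwU, hwle, hwgt⟩ := hwit
  simp only at hwU hwle hwgt
  have hmR : ((m : ℝ)) ≤ (u : ℝ) := by exact_mod_cast hwle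
  have hn1 : 1 ≤ n := by
    rcases Nat.eq_zero_or_pos n with h0 | h0
    · rw [h0, Nat.mul_zero] at hwgt; omega
    · exact h0
  have hnQpos : (0 : ℝ) < (n : ℝ) * Q := by
    have : (1 : ℝ) ≤ (n : ℝ) := by exact_mod_cast hn1
    nlinarith
  have hmLpos : (0 : ℝ) < (m : ℝ) * L := lt_trans hnQpos hwU
  by_cases hnv : n ≤ v
  case pos =>
    -- (A1) split off the witness
    have hv1 : 1 ≤ v := le_trans hn1 hnv
    have hmu : m < u := by
      have h2 : u * n ≤ u * v := Nat.mul_le_mul (le_refl u) hnv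
      have h3 : m * v < u * v := lt_of_lt_of_le hwgt h2
      exact Nat.lt_of_mul_lt_mul_right h3
    have hzU : (((v - n : ℕ)) : ℝ) * Q < (((u - m : ℕ)) : ℝ) * L := by
      rcases side_tri hirr (x := (u - m, v - n)) (by simp only [Ne, Prod.mk.injEq, not_and]; omega)
        with h | h
      · exact h
      · exfalso
        rw [Nat.cast_sub hmu.le, Nat.cast_sub hnv] at h
        have hR : (m : ℝ) * v < (u : ℝ) * n := by exact_mod_cast hwgt
        have hint1 : (n : ℝ) * (((u : ℝ) - m) * L) < (n : ℝ) * (((v : ℝ) - n) * Q) := by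
          have hnpos : (0 : ℝ) < (n : ℝ) := by exact_mod_cast hn1
          exact mul_lt_mul_of_pos_left h hnpos
        have hint2 : ((v : ℝ) - n) * ((n : ℝ) * Q) ≤ ((v : ℝ) - n) * ((m : ℝ) * L) := by
          have hvn : (0 : ℝ) ≤ (v : ℝ) - n := by
            have : (n : ℝ) ≤ (v : ℝ) := by exact_mod_cast hnv
            linarith
          exact mul_le_mul_of_nonneg_left hwU.le hvn
        have hint3 : ((m : ℝ) * v) * L < ((u : ℝ) * n) * L := mul_lt_mul_of_pos_right hR hL
        nlinarith
    refine build_split G hG0 k (m, n) (u - m, v - n) ?_ ?_ ?_ ?_ ?_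
    · simp only [Ne, Prod.mk.injEq, not_and]; omega
    · simp only [Ne, Prod.mk.injEq, not_and]; omega
    · rw [hGk]
      show m + (u - m) = u
      omega
    · rw [hGk]
      show n + (v - n) = v
      omega
    · have n1 : nuW L Q (m, n) = (m : ℝ) * L := nuW_left hwU.le
      have n2 : nuW L Q (u - m, v - n) = (((u - m : ℕ)) : ℝ) * L := nuW_left hzU.le
      rw [n1, n2, hnuk]
      have hsum : (u : ℝ) * L = (m : ℝ) * L + (((u - m : ℕ)) : ℝ) * L := by
        rw [Nat.cast_sub hmu.le]; ring
      rw [hsum]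
      apply rpow_superadd hmLpos _ ht
      have h1 : (1 : ℝ) ≤ (((u - m : ℕ)) : ℝ) := by
        have : 1 ≤ u - m := by omega
        exact_mod_cast this
      nlinarith
  case neg =>
  -- witness has n > v, hence (u,v) is not tight
  have hNT : ((v : ℝ) + 1) * Q < (u : ℝ) * L := by
    have h1 : ((v : ℝ) + 1) ≤ (n : ℝ) := by
      have : v + 1 ≤ n := by omega
      exact_mod_cast this
    have h2 : ((v : ℝ) + 1) * Q ≤ (n : ℝ) * Q := mul_le_mul_of_nonneg_right h1 hQ.le
    have h3 : (m : ℝ) * L ≤ (u : ℝ) * L := mul_le_mul_of_nonneg_right hmR hL.le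
    linarith
  by_cases hu2 : 2 ≤ u
  case pos =>
    -- (A2)
    have hu1R : (1 : ℝ) ≤ (u : ℝ) - 1 := by
      have : (2 : ℝ) ≤ (u : ℝ) := by exact_mod_cast hu2
      linarith
    have hcastu : (((u - 1 : ℕ)) : ℝ) = (u : ℝ) - 1 := by
      rw [Nat.cast_sub hupos]; simp
    rcases side_tri hirr (x := (u - 1, v)) (by simp only [Ne, Prod.mk.injEq, not_and]; omega)
      with hS | hS
    · -- (u-1, v) still upper: split off (1,0)
      refine build_split G hG0 k (u - 1, v) (1, 0) ?_ ?_ ?_ ?_ ?_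
      · simp only [Ne, Prod.mk.injEq, not_and]; omega
      · simp only [Ne, Prod.mk.injEq, not_and]; omega
      · rw [hGk]
        show (u - 1) + 1 = u
        omega
      · rw [hGk]
        show v + 0 = v
        omega
      · have n1 : nuW L Q (u - 1, v) = (((u - 1 : ℕ)) : ℝ) * L := nuW_left hS.le
        have n2 : nuW L Q (1, 0) = L := by
          have h0 : ((0 : ℕ) : ℝ) * Q ≤ ((1 : ℕ) : ℝ) * L := by
            push_cast; nlinarith
          have := nuW_left (L := L) (Q := Q) (x := (1, 0)) h0
          simpa using this
        rw [n1, n2, hnuk, hcastu]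
        have hsum : (u : ℝ) * L = ((u : ℝ) - 1) * L + L := by ring
        rw [hsum]
        apply rpow_superadd _ _ ht
        · exact mul_pos (by linarith) hL
        · exact hL
    · -- (u-1, v) lower: use the floor point
      rw [hcastu] at hS
      set n' := ⌊((u : ℝ) - 1) * L / Q⌋₊ with hn'def
      have hdiv0 : (0 : ℝ) ≤ ((u : ℝ) - 1) * L / Q := by
        apply div_nonneg _ hQ.le
        nlinarith
      have hfl : (n' : ℝ) * Q ≤ ((u : ℝ) - 1) * L := by
        have h0 := Nat.floor_le hdiv0
        calc (n' : ℝ) * Q ≤ (((u : ℝ) - 1) * L / Q) * Q := by nlinarith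
          _ = ((u : ℝ) - 1) * L := by field_simp
      have hflstrict : (n' : ℝ) * Q < ((u : ℝ) - 1) * L := by
        rcases lt_or_eq_of_le hfl with h | h
        · exact h
        · exfalso
          refine hirr (u - 1, n') (by simp only [Ne, Prod.mk.injEq, not_and]; omega) ?_
          simp only [hcastu]
          exact h.symm
      have hup : ((u : ℝ) - 1) * L < ((n' : ℝ) + 1) * Q := by
        have h0 := Nat.lt_floor_add_one (((u : ℝ) - 1) * L / Q)
        rw [div_lt_iff₀ hQ] at h0
        linarith
      have hn'v : n' < v := by
        have h0 : (n' : ℝ) * Q < (v : ℝ) * Q := lt_trans hflstrict hS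
        have : (n' : ℝ) < (v : ℝ) := lt_of_mul_lt_mul_right h0 hQ.le
        exact_mod_cast this
      have hz : (((v - n' : ℕ)) : ℝ) * Q < 1 * L := by
        rw [Nat.cast_sub hn'v.le]
        have : ((v : ℝ) - n') * Q = (v : ℝ) * Q - (n' : ℝ) * Q := by ring
        rw [this]
        have e1 : ((v : ℝ) + 1) * Q = (v : ℝ) * Q + Q := by ring
        have e2 : ((n' : ℝ) + 1) * Q = (n' : ℝ) * Q + Q := by ring
        nlinarith
      refine build_split G hG0 k (u - 1, n') (1, v - n') ?_ ?_ ?_ ?_ ?_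
      · simp only [Ne, Prod.mk.injEq, not_and]; omega
      · simp only [Ne, Prod.mk.injEq, not_and]; omega
      · rw [hGk]
        show (u - 1) + 1 = u
        omega
      · rw [hGk]
        show n' + (v - n') = v
        omega
      · have n1 : nuW L Q (u - 1, n') = (((u - 1 : ℕ)) : ℝ) * L := by
          apply nuW_left
          rw [hcastu]
          exact hflstrict.le
        have n2 : nuW L Q (1, v - n') = L := by
          have h0 : (((v - n' : ℕ)) : ℝ) * Q ≤ ((1 : ℕ) : ℝ) * L := by
            push_cast
            have := hz.le
            linarith [hz.le]
          have := nuW_left (L := L) (Q := Q) (x := (1, v - n')) h0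
          simpa using this
        rw [n1, n2, hnuk, hcastu]
        have hsum : (u : ℝ) * L = ((u : ℝ) - 1) * L + L := by ring
        rw [hsum]
        apply rpow_superadd _ _ ht
        · exact mul_pos (by linarith) hL
        · exact hL
  case neg =>
  -- (A3) u = 1, underfilled part: transfer from a lower part
  have hu1 : u = 1 := by omega
  subst hu1
  by_cases hdon : ∃ j, j ≠ k ∧ ((G j).1 : ℝ) * L < ((G j).2 : ℝ) * Q
  case neg =>
    exfalso
    have hallU : ∀ j, ((G j).2 : ℝ) * Q < ((G j).1 : ℝ) * L := by
      intro j
      rcases eq_or_ne j k with rfl | hjk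
      · rw [hGk]; exact hkU
      · rcases side_tri hirr (hG0 j) with h | h
        · exact h
        · exact absurd ⟨j, hjk, h⟩ hdon
    have ea := sum_comp_eq_add' G Prod.fst (Finset.mem_univ k)
    have eb := sum_comp_eq_add' G Prod.snd (Finset.mem_univ k)
    rw [hGk] at ea eb
    have hrest : ∑ i ∈ Finset.univ \ {k}, ((G i).2 : ℝ) * Q
        ≤ ∑ i ∈ Finset.univ \ {k}, ((G i).1 : ℝ) * L :=
      Finset.sum_le_sum (fun i _ => (hallU i).le)
    have ca : ((∑ i, (G i).1 : ℕ) : ℝ) * L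
        = L + ∑ i ∈ Finset.univ \ {k}, ((G i).1 : ℝ) * L := by
      rw [ea]
      push_cast [Nat.cast_sum]
      rw [add_mul, Finset.sum_mul]
      norm_num
    have cb : ((∑ i, (G i).2 : ℕ) : ℝ) * Q
        = (v : ℝ) * Q + ∑ i ∈ Finset.univ \ {k}, ((G i).2 : ℝ) * Q := by
      rw [eb]
      push_cast [Nat.cast_sum]
      rw [add_mul, Finset.sum_mul]
    rcases hX with ⟨hcopX, hXU, hXmin⟩ | ⟨_, hXL, _⟩
    · -- X upper best: it is tight, but the sums say otherwise
      have ha1 : 1 ≤ ∑ i, (G i).1 :=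
        uside_fst_pos hQ.le (x := (∑ i, (G i).1, ∑ i, (G i).2)) hXU
      dsimp only at hXU hXmin
      have htight : ((∑ i, (G i).1 : ℕ) : ℝ) * L < (((∑ i, (G i).2 : ℕ) : ℝ) + 1) * Q := by
        by_contra hcon
        push_neg at hcon
        have hne : ((∑ i, (G i).1 : ℕ) : ℝ) * L ≠ (((∑ i, (G i).2) + 1 : ℕ) : ℝ) * Q :=
          hirr (∑ i, (G i).1, (∑ i, (G i).2) + 1)
            (by simp only [Ne, Prod.mk.injEq, not_and]; omega)
        have hlt2 : (((∑ i, (G i).2 : ℕ) : ℝ) + 1) * Q < ((∑ i, (G i).1 : ℕ) : ℝ) * L := by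
          rcases lt_or_eq_of_le hcon with h | h
          · exact h
          · exfalso; apply hne; push_cast; push_cast at h; linarith
        have hmin2 := hXmin (∑ i, (G i).1, (∑ i, (G i).2) + 1)
          (by dsimp only; push_cast; push_cast at hlt2; linarith) (le_refl _)
        dsimp only at hmin2
        have hexp : (∑ i, (G i).1) * ((∑ i, (G i).2) + 1)
            = (∑ i, (G i).1) * (∑ i, (G i).2) + (∑ i, (G i).1) := by ring
        omega
      have hNT1 : ((v : ℝ) + 1) * Q < L := by
        have h1 : ((1 : ℕ) : ℝ) * L = L := by norm_num
        rw [← h1]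
        exact hNT
      have hvQ : ((v : ℝ) + 1) * Q = (v : ℝ) * Q + Q := by ring
      have hbQ : (((∑ i, (G i).2 : ℕ) : ℝ) + 1) * Q = ((∑ i, (G i).2 : ℕ) : ℝ) * Q + Q := by
        ring
      linarith
    · -- X lower best: but all parts are upper
      have hXL1 : ((∑ i, (G i).1 : ℕ) : ℝ) * L < ((∑ i, (G i).2 : ℕ) : ℝ) * Q := hXL
      have hstrict : ∑ i, ((G i).2 : ℝ) * Q < ∑ i, ((G i).1 : ℝ) * L :=
        Finset.sum_lt_sum_of_nonempty ⟨k, Finset.mem_univ k⟩ (fun i _ => hallU i)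
      have c1 : ((∑ i, (G i).1 : ℕ) : ℝ) * L = ∑ i, ((G i).1 : ℝ) * L := by
        push_cast [Nat.cast_sum]
        rw [Finset.sum_mul]
      have c2 : ((∑ i, (G i).2 : ℕ) : ℝ) * Q = ∑ i, ((G i).2 : ℝ) * Q := by
        push_cast [Nat.cast_sum]
        rw [Finset.sum_mul]
      rw [c1, c2] at hXL1
      linarith
  case pos =>
    obtain ⟨j, hjk, hjL⟩ := hdon
    have hw2 : 1 ≤ (G j).2 := lside_snd_pos hL.le hjL
    have hnuj : nuW L Q (G j) = ((G j).2 : ℝ) * Q := nuW_right hjL.le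
    have hnewU : (((v + 1 : ℕ)) : ℝ) * Q ≤ ((1 : ℕ) : ℝ) * L := by
      push_cast
      push_cast at hNT
      linarith
    have n3 : nuW L Q (G k) = L := by
      rw [hnuk]; norm_num
    by_cases hj01 : G j = (0, 1)
    · -- merge (1,v) with (0,1)
      refine build_merge G hG0 k j hjk.symm (1, v + 1) ?_ ?_ ?_ ?_
      · simp only [Ne, Prod.mk.injEq, not_and]; omega
      · rw [hGk, hj01]
        show 1 = 1 + 0
        omega
      · rw [hGk, hj01]
      · have n1 : nuW L Q (1, v + 1) = L := by
          have := nuW_left (L := L) (Q := Q) (x := (1, v + 1)) hnewU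
          simpa using this
        have n2 : nuW L Q (0, 1) = Q := by
          have h0 : ((0 : ℕ) : ℝ) * L ≤ ((1 : ℕ) : ℝ) * Q := by push_cast; nlinarith
          have := nuW_right (L := L) (Q := Q) (x := (0, 1)) h0
          simpa using this
        rw [n1, n3, hj01, n2]
        have hQt : (0 : ℝ) < Q ^ t := Real.rpow_pos_of_pos hQ t
        linarith
    · -- transfer one unit of the second coordinate from part j
      refine build_transfer G hG0 k j hjk.symm (1, v + 1) ((G j).1, (G j).2 - 1) ?_ ?_ ?_ ?_ ?_
      · simp only [Ne, Prod.mk.injEq, not_and]; omega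
      · simp only [Ne, Prod.mk.injEq, not_and]
        intro h1 h2
        apply hj01
        have hpair : (G j) = ((G j).1, (G j).2) := rfl
        rw [hpair, h1]
        have h3 : (G j).2 = 1 := by omega
        rw [h3]
      · rw [hGk]
      · rw [hGk]
        show (v + 1) + ((G j).2 - 1) = v + (G j).2
        omega
      · have n1 : nuW L Q (1, v + 1) = L := by
          have := nuW_left (L := L) (Q := Q) (x := (1, v + 1)) hnewU
          simpa using this
        have hw' : nuW L Q ((G j).1, (G j).2 - 1) < ((G j).2 : ℝ) * Q := by
          apply max_lt
          · exact hjL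
          · have hc : (((G j).2 - 1 : ℕ) : ℝ) = ((G j).2 : ℝ) - 1 := by
              rw [Nat.cast_sub hw2]; norm_num
            rw [hc]
            nlinarith
        have hmono : nuW L Q ((G j).1, (G j).2 - 1) ^ t < (((G j).2 : ℝ) * Q) ^ t :=
          Real.rpow_lt_rpow (nuW_nonneg hL.le hQ.le _) hw' ht0
        rw [n1, n3, hnuj]
        linarith
lemma pair_ne_swap {x : ℕ × ℕ} (hx : x ≠ (0, 0)) : (x.2, x.1) ≠ ((0 : ℕ), (0 : ℕ)) := by
  intro h
  apply hx
  have h1 : x.2 = 0 := congrArg Prod.fst h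
  have h2 : x.1 = 0 := congrArg Prod.snd h
  exact Prod.ext_iff.mpr ⟨h2, h1⟩

/-- Improvement step, both sides via swapping. -/
lemma improveP (L Q t : ℝ) (hL : 0 < L) (hQ : 0 < Q) (ht : 1 < t)
    (hirr : ∀ x : ℕ × ℕ, x ≠ (0, 0) → (x.1 : ℝ) * L ≠ (x.2 : ℝ) * Q)
    {N : ℕ} (G : Fin N → ℕ × ℕ) (hG0 : ∀ i, G i ≠ (0, 0))
    (hX : RBestP L Q (∑ i, (G i).1, ∑ i, (G i).2))
    (k : Fin N) (hk : ¬ RBestP L Q (G k)) :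
    ∃ (M : ℕ) (E : Fin M → ℕ × ℕ), (∀ i, E i ≠ (0, 0)) ∧
      (∑ i, (E i).1 = ∑ i, (G i).1) ∧ (∑ i, (E i).2 = ∑ i, (G i).2) ∧
      (∑ i, nuW L Q (E i) ^ t) < ∑ i, nuW L Q (G i) ^ t := by
  rcases side_tri hirr (hG0 k) with hU | hLo
  · exact improve_U L Q t hL hQ ht hirr G hG0 hX k hU hk
  · have hirr' : ∀ x : ℕ × ℕ, x ≠ (0, 0) → (x.1 : ℝ) * Q ≠ (x.2 : ℝ) * L := by
      intro x hx
      have h := hirr (x.2, x.1) (pair_ne_swap hx)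
      exact fun hc => h (by dsimp only at h ⊢; linarith [hc])
    have hG0' : ∀ i, ((G i).2, (G i).1) ≠ ((0 : ℕ), (0 : ℕ)) :=
      fun i => pair_ne_swap (hG0 i)
    have hX' : RBestP Q L (∑ i, (G i).2, ∑ i, (G i).1) :=
      (RBestP_swap L Q (∑ i, (G i).1, ∑ i, (G i).2)).mpr hX
    have hk' : ¬ RBestP Q L ((G k).2, (G k).1) := by
      intro h
      exact hk ((RBestP_swap L Q (G k)).mp h)
    obtain ⟨M, E', hE0, hs1, hs2, hlt⟩ :=
      improve_U Q L t hQ hL ht hirr' (fun i => ((G i).2, (G i).1)) hG0' hX' k hLo hk'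
    refine ⟨M, fun i => ((E' i).2, (E' i).1), ?_, ?_, ?_, ?_⟩
    · intro i
      exact pair_ne_swap (hE0 i)
    · exact hs2
    · exact hs1
    · calc ∑ i, nuW L Q ((E' i).2, (E' i).1) ^ t
          = ∑ i, nuW Q L (E' i) ^ t :=
            Finset.sum_congr rfl (fun i _ => by rw [nuW_swap Q L (E' i)])
        _ < ∑ i, nuW Q L ((G i).2, (G i).1) ^ t := hlt
        _ = ∑ i, nuW L Q (G i) ^ t :=
            Finset.sum_congr rfl (fun i _ => by rw [nuW_swap L Q (G i)])
/-! Number-theoretic bridges -/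

lemma pow_eq_exponents {p q : ℕ} (hp : p.Prime) (hq : q.Prime) (hpq : p ≠ q) {x y z w : ℕ}
    (h : p ^ x * q ^ y = p ^ z * q ^ w) : x = z ∧ y = w := by
  have hq' : q ≠ p := Ne.symm hpq
  have hpne : ∀ n : ℕ, p ^ n ≠ 0 := fun n => pow_ne_zero n hp.pos.ne'
  have hqne : ∀ n : ℕ, q ^ n ≠ 0 := fun n => pow_ne_zero n hq.pos.ne'
  have h1 := congrArg (fun m => m.factorization p) h
  have h2 := congrArg (fun m => m.factorization q) h
  simp only [Nat.factorization_mul (hpne _) (hqne _), Finsupp.add_apply,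
    hp.factorization_pow, hq.factorization_pow, Finsupp.single_eq_same,
    Finsupp.single_eq_of_ne hq', Finsupp.single_eq_of_ne hpq,
    add_zero, zero_add] at h1 h2
  exact ⟨h1, h2⟩

lemma irr_pq {p q : ℕ} (hp : p.Prime) (hq : q.Prime) (hpq : p ≠ q) :
    ∀ x : ℕ × ℕ, x ≠ (0, 0) → (x.1 : ℝ) * Real.log p ≠ (x.2 : ℝ) * Real.log q := by
  intro x hx heq
  have hppos : (0 : ℝ) < (p : ℝ) ^ x.1 := by
    have : (0 : ℝ) < (p : ℝ) := by exact_mod_cast hp.pos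
    positivity
  have hqpos : (0 : ℝ) < (q : ℝ) ^ x.2 := by
    have : (0 : ℝ) < (q : ℝ) := by exact_mod_cast hq.pos
    positivity
  have h1 : Real.log ((p : ℝ) ^ x.1) = Real.log ((q : ℝ) ^ x.2) := by
    rw [Real.log_pow, Real.log_pow]; exact heq
  have h2 : (p : ℝ) ^ x.1 = (q : ℝ) ^ x.2 :=
    le_antisymm ((Real.log_le_log_iff hppos hqpos).mp h1.le)
      ((Real.log_le_log_iff hqpos hppos).mp h1.ge)
  have h3 : p ^ x.1 = q ^ x.2 := by exact_mod_cast h2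
  have h4 : p ^ x.1 * q ^ 0 = p ^ 0 * q ^ x.2 := by simpa using h3
  obtain ⟨e1, e2⟩ := pow_eq_exponents hp hq hpq h4
  exact hx (Prod.ext_iff.mpr ⟨e1, e2.symm⟩)

lemma fact_decode {p q : ℕ} (hp : p.Prime) (hq : q.Prime) (hpq : p ≠ q) {a b N : ℕ}
    {A B : Fin N → ℕ}
    (hfact : IsFactorization ((p : ℚ) ^ a / (q : ℚ) ^ b)
      (fun n => p ^ A n) (fun n => q ^ B n)) :
    (∀ n, (A n, B n) ≠ ((0 : ℕ), (0 : ℕ))) ∧ (∑ n, A n = a) ∧ (∑ n, B n = b) := by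
  obtain ⟨hr, hs, hne1, hcop, hprod⟩ := hfact
  have hqQ : (q : ℚ) ≠ 0 := by
    have := hq.pos
    exact_mod_cast this.ne'
  have hpQ : (p : ℚ) ≠ 0 := by
    have := hp.pos
    exact_mod_cast this.ne'
  push_cast at hprod
  rw [Finset.prod_div_distrib, Finset.prod_pow_eq_pow_sum, Finset.prod_pow_eq_pow_sum] at hprod
  rw [div_eq_div_iff (pow_ne_zero _ hqQ) (pow_ne_zero _ hqQ)] at hprod
  have hnat : p ^ (∑ n, A n) * q ^ b = p ^ a * q ^ (∑ n, B n) := by exact_mod_cast hprod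
  obtain ⟨h1, h2⟩ := pow_eq_exponents hp hq hpq hnat
  refine ⟨?_, h1, h2.symm⟩
  intro n hn0
  have hA0 : A n = 0 := congrArg Prod.fst hn0
  have hB0 : B n = 0 := congrArg Prod.snd hn0
  apply hne1 n
  simp only [hA0, hB0, pow_zero]
  norm_num

lemma fact_encode {p q : ℕ} (hp : p.Prime) (hq : q.Prime) (hpq : p ≠ q) {a b M : ℕ}
    (E : Fin M → ℕ × ℕ) (h0 : ∀ i, E i ≠ (0, 0))
    (h1 : ∑ i, (E i).1 = a) (h2 : ∑ i, (E i).2 = b) :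
    IsFactorization ((p : ℚ) ^ a / (q : ℚ) ^ b)
      (fun i => p ^ (E i).1) (fun i => q ^ (E i).2) := by
  have hqQ : (q : ℚ) ≠ 0 := by
    have := hq.pos
    exact_mod_cast this.ne'
  refine ⟨fun n => pow_pos hp.pos _, fun n => pow_pos hq.pos _, ?_, ?_, ?_⟩
  · intro n hn
    rw [div_eq_one_iff_eq (by exact_mod_cast pow_ne_zero _ hqQ)] at hn
    have h3 : p ^ (E n).1 = q ^ (E n).2 := by exact_mod_cast hn
    have h4 : p ^ (E n).1 * q ^ 0 = p ^ 0 * q ^ (E n).2 := by simpa using h3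
    obtain ⟨e1, e2⟩ := pow_eq_exponents hp hq hpq h4
    exact h0 n (Prod.ext_iff.mpr ⟨e1, e2.symm⟩)
  · intro m n
    exact Nat.Coprime.pow _ _ ((Nat.coprime_primes hp hq).mpr hpq)
  · push_cast
    rw [Finset.prod_div_distrib, Finset.prod_pow_eq_pow_sum, Finset.prod_pow_eq_pow_sum, h1, h2]

lemma fmeas_eq {p q : ℕ} (hp : p.Prime) (hq : q.Prime) {M : ℕ} (E : Fin M → ℕ × ℕ) (t : ℝ) :
    fmeas (fun i => p ^ (E i).1) (fun i => q ^ (E i).2) t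
      = (∑ i, nuW (Real.log p) (Real.log q) (E i) ^ t) ^ (1 / t) := by
  unfold fmeas
  congr 1
  apply Finset.sum_congr rfl
  intro i _
  congr 1
  have hp0 : (0 : ℝ) < (p : ℝ) := by exact_mod_cast hp.pos
  have hq0 : (0 : ℝ) < (q : ℝ) := by exact_mod_cast hq.pos
  have hppos : (0 : ℝ) < (p : ℝ) ^ (E i).1 := by positivity
  have hqpos : (0 : ℝ) < (q : ℝ) ^ (E i).2 := by positivity
  have hc1 : ((p ^ (E i).1 : ℕ) : ℝ) = (p : ℝ) ^ (E i).1 := by push_cast; ring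
  have hc2 : ((q ^ (E i).2 : ℕ) : ℝ) = (q : ℝ) ^ (E i).2 := by push_cast; ring
  rw [Nat.cast_max, hc1, hc2]
  simp only [nuW]
  rcases le_total (((E i).1 : ℝ) * Real.log p) (((E i).2 : ℝ) * Real.log q) with h | h
  · have hpow : (p : ℝ) ^ (E i).1 ≤ (q : ℝ) ^ (E i).2 :=
      (Real.log_le_log_iff hppos hqpos).mp (by rw [Real.log_pow, Real.log_pow]; exact h)
    rw [max_eq_right hpow, max_eq_right h, Real.log_pow]
  · have hpow : (q : ℝ) ^ (E i).2 ≤ (p : ℝ) ^ (E i).1 :=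
      (Real.log_le_log_iff hqpos hppos).mp (by rw [Real.log_pow, Real.log_pow]; exact h)
    rw [max_eq_left hpow, max_eq_left h, Real.log_pow]

/-! Set-membership bridges -/

lemma mem_Uset_iff {L Q : ℝ} (hL : 0 < L) (x : ℕ × ℕ) :
    x ∈ Uset (Q / L) ↔ (x.2 : ℝ) * Q < (x.1 : ℝ) * L := by
  constructor
  · rintro ⟨hne, hlt⟩
    rw [← mul_div_assoc] at hlt
    exact (div_lt_iff₀ hL).mp hlt
  · intro h
    refine ⟨?_, ?_⟩
    · rintro rfl
      norm_num at h
    · rw [← mul_div_assoc]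
      exact (div_lt_iff₀ hL).mpr h

lemma mem_Lset_iff {L Q : ℝ} (hL : 0 < L) (x : ℕ × ℕ) :
    x ∈ Lset (Q / L) ↔ (x.1 : ℝ) * L < (x.2 : ℝ) * Q := by
  constructor
  · rintro ⟨hne, hlt⟩
    rw [← mul_div_assoc] at hlt
    exact (lt_div_iff₀ hL).mp hlt
  · intro h
    refine ⟨?_, ?_⟩
    · rintro rfl
      norm_num at h
    · rw [← mul_div_assoc]
      exact (lt_div_iff₀ hL).mpr h

lemma mem_Gset_iff (x : ℕ × ℕ) : x ∈ Gset ↔ Nat.Coprime x.1 x.2 := by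
  constructor
  · rintro ⟨_, h⟩
    exact h
  · intro h
    refine ⟨?_, h⟩
    rintro rfl
    simp [Nat.Coprime] at h

lemma mem_U1_iff {L Q : ℝ} (hL : 0 < L) (x : ℕ × ℕ) :
    x ∈ U1 (Q / L) ↔ RU1P L Q x := by
  constructor
  · rintro ⟨h1, h2⟩
    refine ⟨(mem_Uset_iff hL x).mp h1, ?_⟩
    intro y hy hle
    exact h2 y ((mem_Uset_iff hL y).mpr hy) hle
  · rintro ⟨h1, h2⟩
    refine ⟨(mem_Uset_iff hL x).mpr h1, ?_⟩
    intro y hy hle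
    exact h2 y ((mem_Uset_iff hL y).mp hy) hle

lemma mem_L2_iff {L Q : ℝ} (hL : 0 < L) (x : ℕ × ℕ) :
    x ∈ L2 (Q / L) ↔ RU1P Q L (x.2, x.1) := by
  constructor
  · rintro ⟨h1, h2⟩
    constructor
    · exact (mem_Lset_iff hL x).mp h1
    · intro y' hy' hle
      have := h2 (y'.2, y'.1) ((mem_Lset_iff hL (y'.2, y'.1)).mpr (by dsimp only; exact hy')) hle
      calc x.2 * y'.2 = y'.2 * x.2 := Nat.mul_comm _ _
        _ ≤ x.1 * y'.1 := this
        _ = y'.1 * x.1 := Nat.mul_comm _ _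
  · rintro ⟨h1, h2⟩
    constructor
    · exact (mem_Lset_iff hL x).mpr h1
    · intro y hy hle
      have h3 := h2 (y.2, y.1) (by dsimp only; have := (mem_Lset_iff hL y).mp hy; linarith) hle
      dsimp only at h3
      calc y.1 * x.2 = x.2 * y.1 := Nat.mul_comm _ _
        _ ≤ y.2 * x.1 := h3
        _ = x.1 * y.2 := Nat.mul_comm _ _

lemma best_bridge {L Q : ℝ} (hL : 0 < L) (x : ℕ × ℕ) :
    BestApprox (Q / L) x ↔ RBestP L Q x := by
  unfold BestApprox RBestP
  constructor
  · rintro (⟨hg, hu⟩ | ⟨hg, hl⟩)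
    · exact Or.inl ⟨(mem_Gset_iff x).mp hg, (mem_U1_iff hL x).mp hu⟩
    · exact Or.inr ⟨(mem_Gset_iff x).mp hg, (mem_L2_iff hL x).mp hl⟩
  · rintro (⟨hg, hu⟩ | ⟨hg, hl⟩)
    · exact Or.inl ⟨(mem_Gset_iff x).mpr hg, (mem_U1_iff hL x).mpr hu⟩
    · exact Or.inr ⟨(mem_Gset_iff x).mpr hg, (mem_L2_iff hL x).mpr hl⟩
/-- Theorem `Main`: if `(a,b)` is an upper or lower best approximation
for `ξ = log q / log p` and a factorization of `α = p^a/q^b` attains the infimum in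
`m_t(α)` over `ℱ(α)` for some `t > 1`, then every `(aₙ,bₙ)` is an upper or lower best
approximation for `ξ`. -/
theorem stmt_1 (p q : ℕ) (hp : p.Prime) (hq : q.Prime) (hpq : p ≠ q)
    (ξ : ℝ) (hξ : ξ = Real.log q / Real.log p)
    (a b : ℕ) (hba : BestApprox ξ (a, b))
    (N : ℕ) (A B : Fin N → ℕ)
    (hfact : IsFactorization ((p : ℚ) ^ a / (q : ℚ) ^ b)
      (fun n => p ^ A n) (fun n => q ^ B n))
    (t : ℝ) (ht : 1 < t)
    (hmin : ∀ (M : ℕ) (r s : Fin M → ℕ),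
      IsFactorization ((p : ℚ) ^ a / (q : ℚ) ^ b) r s →
      fmeas (fun n => p ^ A n) (fun n => q ^ B n) t ≤ fmeas r s t) :
    ∀ n : Fin N, BestApprox ξ (A n, B n) := by
  intro k
  have hL : (0 : ℝ) < Real.log p := Real.log_pos (by exact_mod_cast hp.one_lt)
  have hQ : (0 : ℝ) < Real.log q := Real.log_pos (by exact_mod_cast hq.one_lt)
  have ht0 : (0 : ℝ) < t := by linarith
  have hirr := irr_pq hp hq hpq
  obtain ⟨h0, hA, hB⟩ := fact_decode hp hq hpq hfact
  by_contra hbad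
  set L := Real.log p
  set Q := Real.log q
  have hξ' : ξ = Q / L := hξ
  have e1 : ∑ i, ((fun n => (A n, B n)) i).1 = a := hA
  have e2 : ∑ i, ((fun n => (A n, B n)) i).2 = b := hB
  have hX : RBestP L Q (∑ i, ((fun n => (A n, B n)) i).1, ∑ i, ((fun n => (A n, B n)) i).2) := by
    rw [e1, e2]
    exact (best_bridge hL (a, b)).mp (by rw [← hξ']; exact hba)
  have hk : ¬ RBestP L Q ((fun n => (A n, B n)) k) := by
    intro h
    apply hbad
    have := (best_bridge hL (A k, B k)).mpr h
    rw [← hξ'] at this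
    exact this
  obtain ⟨M, E, hE0, hs1, hs2, hlt⟩ :=
    improveP L Q t hL hQ ht hirr (fun n => (A n, B n)) (fun i => h0 i) hX k hk
  have hfactE := fact_encode hp hq hpq E hE0 (hs1.trans e1) (hs2.trans e2)
  have hcomp := hmin M _ _ hfactE
  have eqA : fmeas (fun n => p ^ A n) (fun n => q ^ B n) t
      = (∑ i, nuW L Q ((fun n => (A n, B n)) i) ^ t) ^ (1 / t) :=
    fmeas_eq hp hq (fun n => (A n, B n)) t
  have eqE : fmeas (fun i => p ^ (E i).1) (fun i => q ^ (E i).2) t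
      = (∑ i, nuW L Q (E i) ^ t) ^ (1 / t) := fmeas_eq hp hq E t
  rw [eqA, eqE] at hcomp
  have hnonneg : (0 : ℝ) ≤ ∑ i, nuW L Q (E i) ^ t :=
    Finset.sum_nonneg fun i _ => Real.rpow_nonneg (nuW_nonneg hL.le hQ.le _) t
  have hstrict : (∑ i, nuW L Q (E i) ^ t) ^ (1 / t)
      < (∑ i, nuW L Q ((fun n => (A n, B n)) i) ^ t) ^ (1 / t) :=
    Real.rpow_lt_rpow hnonneg hlt (by positivity)
  linarith
end

section
/- Let n be an even positive integer and let p and q be primes satisfying hₙ/hₙ₋₁ < (log q)/(log p) < hₙ₊₁/hₙ, and set ξ = log q / log p (a positive irrational real number). Then for every (m,k) ∈ 𝒩 with m ≤ hₙ₊₁ and k ≤ hₙ, the pair (m,k) is an upper or lower best approximation for ξ if and only if (m,k) = (hᵢ₊₁, hᵢ) for some 0 ≤ i ≤ n. Equivalently, the characteristic transformation of α = p^{hₙ₊₁}/q^{hₙ} has columns (h₁,h₀), (h₂,h₁), …, (hₙ₊₁,hₙ). -/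
open Real Finset

section StmtFiveAux


lemma fib_det_int (i : ℕ) :
    (Nat.fib (i+2) : ℤ) * Nat.fib i - (Nat.fib (i+1) : ℤ) * Nat.fib (i+1) = (-1)^(i+1) := by
  induction i with
  | zero => norm_num [Nat.fib_one, Nat.fib_two]
  | succ n ih =>
    have h1 : (Nat.fib (n+3) : ℤ) = Nat.fib (n+1) + Nat.fib (n+2) := by
      exact_mod_cast (Nat.fib_add_two (n := n+1))
    have h2 : (Nat.fib (n+2) : ℤ) = Nat.fib n + Nat.fib (n+1) := by
      exact_mod_cast (Nat.fib_add_two (n := n))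
    have hp : ((-1:ℤ))^(n+1+1) = -(-1)^(n+1) := by ring
    rw [show n+1+2 = n+3 from rfl, h1, hp]
    linear_combination (-1 : ℤ) * ih - (Nat.fib (n+2) : ℤ) * h2

lemma det_odd {i : ℕ} (h : Odd i) :
    Nat.fib (i+2) * Nat.fib i = Nat.fib (i+1) * Nat.fib (i+1) + 1 := by
  have hd := fib_det_int i
  have hp : ((-1:ℤ))^(i+1) = 1 := (h.add_one).neg_one_pow
  have : (Nat.fib (i+2) : ℤ) * Nat.fib i = (Nat.fib (i+1) : ℤ) * Nat.fib (i+1) + 1 := by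
    rw [hp] at hd; linarith
  exact_mod_cast this

lemma det_even {i : ℕ} (h : Even i) :
    Nat.fib (i+1) * Nat.fib (i+1) = Nat.fib (i+2) * Nat.fib i + 1 := by
  have hd := fib_det_int i
  have hp : ((-1:ℤ))^(i+1) = -1 := (h.add_one).neg_one_pow
  have : (Nat.fib (i+1) : ℤ) * Nat.fib (i+1) = (Nat.fib (i+2) : ℤ) * Nat.fib i + 1 := by
    rw [hp] at hd; linarith
  exact_mod_cast this

lemma E_odd {i : ℕ} (h : Odd i) :
    Nat.fib (i+3) * Nat.fib i = Nat.fib (i+2) * Nat.fib (i+1) + 1 := by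
  have h3 : Nat.fib (i+3) = Nat.fib (i+1) + Nat.fib (i+2) := Nat.fib_add_two
  have h4 : Nat.fib (i+2) = Nat.fib i + Nat.fib (i+1) := Nat.fib_add_two
  have h5 := det_odd h
  calc Nat.fib (i+3) * Nat.fib i = Nat.fib (i+2) * Nat.fib i + Nat.fib (i+1) * Nat.fib i := by
        rw [h3]; ring
    _ = Nat.fib (i+1) * Nat.fib (i+1) + 1 + Nat.fib (i+1) * Nat.fib i := by rw [h5]
    _ = Nat.fib (i+1) * (Nat.fib i + Nat.fib (i+1)) + 1 := by ring
    _ = Nat.fib (i+2) * Nat.fib (i+1) + 1 := by rw [← h4]; ring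

lemma E_even {i : ℕ} (h : Even i) :
    Nat.fib (i+2) * Nat.fib (i+1) = Nat.fib (i+3) * Nat.fib i + 1 := by
  have h3 : Nat.fib (i+3) = Nat.fib (i+1) + Nat.fib (i+2) := Nat.fib_add_two
  have h4 : Nat.fib (i+2) = Nat.fib i + Nat.fib (i+1) := Nat.fib_add_two
  have h5 := det_even h
  calc Nat.fib (i+2) * Nat.fib (i+1)
      = Nat.fib (i+1) * (Nat.fib i + Nat.fib (i+1)) := by rw [← h4]; ring
    _ = Nat.fib (i+1) * Nat.fib i + Nat.fib (i+1) * Nat.fib (i+1) := by ring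
    _ = Nat.fib (i+1) * Nat.fib i + (Nat.fib (i+2) * Nat.fib i + 1) := by rw [h5]
    _ = (Nat.fib (i+1) + Nat.fib (i+2)) * Nat.fib i + 1 := by ring
    _ = Nat.fib (i+3) * Nat.fib i + 1 := by rw [h3]

lemma cross_lt {ξ : ℝ} {a b c d : ℕ} (hd : 0 < d)
    (h1 : (c:ℝ) < (d:ℝ) * ξ) (h2 : (b:ℝ) * ξ < (a:ℝ)) : b * c < a * d := by
  have hdR : (0:ℝ) < (d:ℝ) := by exact_mod_cast hd
  have hbR : (0:ℝ) ≤ (b:ℝ) := by positivity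
  have : (b:ℝ) * c < (a:ℝ) * d := by nlinarith
  exact_mod_cast this

lemma cross_eq {a b c d : ℕ} (h : a * d = c * b) (hab : a.Coprime b)
    (hcd : c.Coprime d) : a = c ∧ b = d := by
  have hac : a ∣ c := by
    have : a ∣ c * b := ⟨d, h.symm⟩
    exact (Nat.Coprime.dvd_of_dvd_mul_right hab this)
  have hca : c ∣ a := by
    have : c ∣ a * d := ⟨b, h⟩
    exact (Nat.Coprime.dvd_of_dvd_mul_right hcd this)
  have hace : a = c := Nat.dvd_antisymm hac hca
  subst hace
  rcases Nat.eq_zero_or_pos a with h0 | h0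
  · subst h0
    have hb := Nat.coprime_zero_left b |>.mp hab
    have hd := Nat.coprime_zero_left d |>.mp hcd
    exact ⟨rfl, by rw [hb, hd]⟩
  · exact ⟨rfl, (Nat.eq_of_mul_eq_mul_left h0 (by linarith [h] : a * d = a * b)).symm⟩

lemma pair_ne0 {a b : ℕ} (ha : 0 < a) : ((a, b) : ℕ × ℕ) ≠ (0, 0) := by
  simp only [ne_eq, Prod.mk.injEq, not_and]
  intro h; omega


lemma aux_low (ξ : ℝ) (v : ℕ) (hb : (Nat.fib (2*v+2):ℝ) < Nat.fib (2*v+1) * ξ) :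
    ∀ j, Odd j → j ≤ 2*v+1 → (Nat.fib (j+1):ℝ) < Nat.fib j * ξ := by
  have Q : ∀ t s, s + t = v → (Nat.fib (2*s+2):ℝ) < Nat.fib (2*s+1) * ξ := by
    intro t
    induction t with
    | zero => intro s hs; subst_vars; simpa using hb
    | succ t ih =>
      intro s hs
      have ih' := ih (s+1) (by omega)
      rw [show 2*(s+1)+2 = 2*s+4 from by ring, show 2*(s+1)+1 = 2*s+3 from by ring] at ih'
      have hE := E_odd (i := 2*s+1) ⟨s, by ring⟩
      rw [show 2*s+1+3 = 2*s+4 from by ring, show 2*s+1+2 = 2*s+3 from by ring,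
        show 2*s+1+1 = 2*s+2 from by ring] at hE
      have hEc : (Nat.fib (2*s+4):ℝ) * Nat.fib (2*s+1) = Nat.fib (2*s+3) * Nat.fib (2*s+2) + 1 := by
        exact_mod_cast hE
      have p3 : (0:ℝ) < Nat.fib (2*s+3) := by exact_mod_cast Nat.fib_pos.mpr (by omega)
      have p1 : (0:ℝ) ≤ Nat.fib (2*s+1) := by positivity
      have key : (Nat.fib (2*s+2):ℝ) * Nat.fib (2*s+3) < (Nat.fib (2*s+1) * ξ) * Nat.fib (2*s+3) := by
        nlinarith
      exact lt_of_mul_lt_mul_right key p3.le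
  intro j hj hjle
  obtain ⟨s, rfl⟩ := hj
  have := Q (v - s) s (by omega)
  rw [show 2*s+1+1 = 2*s+2 from rfl] 
  exact this

lemma aux_up (ξ : ℝ) (v : ℕ) (hb : (Nat.fib (2*v+2):ℝ) * ξ < Nat.fib (2*v+3)) :
    ∀ j, Even j → j ≤ 2*v+2 → (Nat.fib j:ℝ) * ξ < Nat.fib (j+1) := by
  have Q : ∀ t s, s + t = v + 1 → (Nat.fib (2*s):ℝ) * ξ < Nat.fib (2*s+1) := by
    intro t
    induction t with
    | zero =>
      intro s hs
      have : s = v + 1 := by omega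
      subst this
      rw [show 2*(v+1) = 2*v+2 from by ring, show 2*v+2+1 = 2*v+3 from rfl]
      exact hb
    | succ t ih =>
      intro s hs
      have ih' := ih (s+1) (by omega)
      rw [show 2*(s+1) = 2*s+2 from by ring, show 2*s+2+1 = 2*s+3 from rfl] at ih'
      have hE := E_even (i := 2*s) ⟨s, by ring⟩
      rw [show 2*s+3 = 2*s+3 from rfl] at hE
      have hEc : (Nat.fib (2*s+2):ℝ) * Nat.fib (2*s+1) = Nat.fib (2*s+3) * Nat.fib (2*s) + 1 := by
        exact_mod_cast hE
      have p2 : (0:ℝ) < Nat.fib (2*s+2) := by exact_mod_cast Nat.fib_pos.mpr (by omega)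
      have p0 : (0:ℝ) ≤ Nat.fib (2*s) := by positivity
      have key : ((Nat.fib (2*s):ℝ) * ξ) * Nat.fib (2*s+2) < (Nat.fib (2*s+1):ℝ) * Nat.fib (2*s+2) := by
        nlinarith
      exact lt_of_mul_lt_mul_right key p2.le
  intro j hj hjle
  obtain ⟨s, rfl⟩ := hj
  have := Q (v + 1 - s) s (by omega)
  rw [show s + s = 2*s from by ring]
  exact this

end StmtFiveAux

set_option maxHeartbeats 1000000 in
/-- Theorem `GRApprox` (ii): if `n` is even and positive and `p`, `q` are
primes with `hₙ/hₙ₋₁ < log q / log p < hₙ₊₁/hₙ`, then among pairs `(m,k) ∈ 𝒩` with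
`m ≤ hₙ₊₁` and `k ≤ hₙ`, the upper and lower best approximations for
`ξ = log q / log p` are exactly the pairs `(hᵢ₊₁, hᵢ)` for `0 ≤ i ≤ n`. -/
theorem stmt_5 (n : ℕ) (hn : 0 < n) (hne : Even n)
    (p q : ℕ) (hp : p.Prime) (hq : q.Prime)
    (h1 : (Nat.fib n : ℝ) / (Nat.fib (n - 1) : ℝ) < Real.log q / Real.log p)
    (h2 : Real.log q / Real.log p < (Nat.fib (n + 1) : ℝ) / (Nat.fib n : ℝ))
    (ξ : ℝ) (hξ : ξ = Real.log q / Real.log p) :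
    ∀ m k : ℕ, (m, k) ≠ (0, 0) → m ≤ Nat.fib (n + 1) → k ≤ Nat.fib n →
      (BestApprox ξ (m, k) ↔ ∃ i ≤ n, m = Nat.fib (i + 1) ∧ k = Nat.fib i) := by
  rw [← hξ] at h1 h2
  obtain ⟨v, rfl⟩ : ∃ v, n = 2*v+2 := by
    rcases hne with ⟨w, hw⟩; exact ⟨w - 1, by omega⟩
  rw [show 2*v+2-1 = 2*v+1 from by omega] at h1
  have f1pos : (0:ℝ) < Nat.fib (2*v+1) := by exact_mod_cast Nat.fib_pos.mpr (by omega)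
  have f2pos : (0:ℝ) < Nat.fib (2*v+2) := by exact_mod_cast Nat.fib_pos.mpr (by omega)
  have hb1 : (Nat.fib (2*v+2):ℝ) < Nat.fib (2*v+1) * ξ := by
    rw [div_lt_iff₀ f1pos] at h1; linarith
  have hb2 : (Nat.fib (2*v+2):ℝ) * ξ < Nat.fib (2*v+3) := by
    rw [show 2*v+2+1 = 2*v+3 from rfl] at h2
    rw [lt_div_iff₀ f2pos] at h2; linarith
  have low := aux_low ξ v hb1
  have up := aux_up ξ v hb2
  have hξ1 : 1 < ξ := by
    have := low 1 odd_one (by omega)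
    simpa [Nat.fib_one, Nat.fib_two] using this
  have hξ0 : 0 < ξ := by linarith
  intro m k hmk hm hk
  rw [show 2*v+2+1 = 2*v+3 from rfl] at hm
  constructor
  · rintro (⟨hG, ⟨⟨hx0, hxlt⟩, hmin⟩⟩ | ⟨hG, ⟨⟨hx0, hxlt⟩, hmin⟩⟩)
    · -- upper case
      have hxlt' : (k:ℝ) * ξ < (m:ℝ) := hxlt
      have hcop : Nat.Coprime m k := hG.2
      have hm1 : 1 ≤ m := by
        rcases Nat.eq_zero_or_pos m with h0 | h0
        · exfalso; subst h0
          have : (0:ℝ) ≤ (k:ℝ) * ξ := by positivity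
          simp at hxlt'; linarith
        · exact h0
      classical
      set P : ℕ → Prop := fun j => Even j ∧ Nat.fib (j+1) ≤ m with hP
      have hP0 : P 0 := ⟨Even.zero, by simpa [Nat.fib_one] using hm1⟩
      have hPj : P (Nat.findGreatest P (2*v+2)) := Nat.findGreatest_spec (Nat.zero_le _) hP0
      set j := Nat.findGreatest P (2*v+2) with hjdef
      have hjle : j ≤ 2*v+2 := Nat.findGreatest_le _
      obtain ⟨hjeven, hjm⟩ := hPj
      by_cases hcase : j = 2*v+2
      · have hm' : m = Nat.fib (2*v+3) := le_antisymm hm (by rw [hcase] at hjm; exact hjm)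
        have hyU : ((Nat.fib (2*v+3), Nat.fib (2*v+2)) : ℕ×ℕ) ∈ Uset ξ := by
          exact ⟨pair_ne0 (Nat.fib_pos.mpr (by omega)), up (2*v+2) ⟨v+1, by ring⟩ le_rfl⟩
        have hc := hmin _ hyU (by simp [hm'])
        simp only at hc
        rw [hm'] at hc
        have hk' : Nat.fib (2*v+2) ≤ k := by
          have hfp : 0 < Nat.fib (2*v+3) := Nat.fib_pos.mpr (by omega)
          exact Nat.le_of_mul_le_mul_left (by linarith [hc]) hfp
        exact ⟨2*v+2, le_rfl, hm', le_antisymm hk hk'⟩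
      · have hjlt : j < 2*v+2 := lt_of_le_of_ne hjle hcase
        obtain ⟨c, hc⟩ := hjeven
        have hj2 : j + 2 ≤ 2*v+2 := by omega
        have hnP : ¬ P (j+2) := Nat.findGreatest_is_greatest (by omega) hj2
        have hm3 : m < Nat.fib (j+3) := by
          by_contra hcon; push_neg at hcon
          exact hnP ⟨⟨c+1, by omega⟩, hcon⟩
        have hyU : ((Nat.fib (j+1), Nat.fib j) : ℕ×ℕ) ∈ Uset ξ := by
          exact ⟨pair_ne0 (Nat.fib_pos.mpr (by omega)), up j ⟨c, hc⟩ (by omega)⟩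
        have h5 : m * Nat.fib j ≤ Nat.fib (j+1) * k := hmin _ hyU hjm
        have h6 : k * Nat.fib (j+2) < m * Nat.fib (j+1) := by
          refine cross_lt (Nat.fib_pos.mpr (by omega)) ?_ hxlt'
          exact low (j+1) ⟨c, by omega⟩ (by omega)
        rcases eq_or_lt_of_le h5 with heq | hlt2
        · obtain ⟨hm', hk'⟩ := cross_eq heq hcop ((Nat.fib_coprime_fib_succ j).symm)
          exact ⟨j, by omega, hm', hk'⟩
        · exfalso
          have hid := det_even (i := j) ⟨c, hc⟩
          have hfib3 : Nat.fib (j+3) = Nat.fib (j+1) + Nat.fib (j+2) := Nat.fib_add_two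
          have h1' := Nat.mul_le_mul_left (Nat.fib (j+2)) (Nat.succ_le_of_lt hlt2)
          have h2' := Nat.mul_le_mul_left (Nat.fib (j+1)) (Nat.succ_le_of_lt h6)
          have h3' : m * (Nat.fib (j+1) * Nat.fib (j+1))
              = m * (Nat.fib (j+2) * Nat.fib j) + m := by rw [hid]; ring
          have hfin : Nat.fib (j+1) + Nat.fib (j+2) ≤ m := by nlinarith [h1', h2', h3']
          omega
    · -- lower case
      have hxlt' : (m:ℝ) < (k:ℝ) * ξ := hxlt
      have hcop : Nat.Coprime m k := hG.2
      have hk1 : 1 ≤ k := by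
        rcases Nat.eq_zero_or_pos k with h0 | h0
        · exfalso; subst h0
          have : (0:ℝ) ≤ (m:ℝ) := by positivity
          simp at hxlt'; linarith
        · exact h0
      classical
      set P : ℕ → Prop := fun j => Odd j ∧ Nat.fib j ≤ k with hP
      have hP1 : P 1 := ⟨odd_one, by simpa [Nat.fib_one] using hk1⟩
      have hPj : P (Nat.findGreatest P (2*v+1)) :=
        Nat.findGreatest_spec (by omega : 1 ≤ 2*v+1) hP1
      set j := Nat.findGreatest P (2*v+1) with hjdef
      have hjle : j ≤ 2*v+1 := Nat.findGreatest_le _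
      obtain ⟨hjodd, hjk⟩ := hPj
      by_cases hcase : j = 2*v+1
      · have hyL : ((Nat.fib (2*v+2), Nat.fib (2*v+1)) : ℕ×ℕ) ∈ Lset ξ := by
          exact ⟨pair_ne0 (Nat.fib_pos.mpr (by omega)), hb1⟩
        have h5 : Nat.fib (2*v+2) * k ≤ m * Nat.fib (2*v+1) :=
          hmin _ hyL (by rw [hcase] at hjk; exact hjk)
        have h6 : Nat.fib (2*v+2) * m < Nat.fib (2*v+3) * k :=
          cross_lt hk1 hxlt' hb2
        rcases eq_or_lt_of_le h5 with heq | hlt2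
        · obtain ⟨hm', hk'⟩ := cross_eq heq.symm hcop ((Nat.fib_coprime_fib_succ (2*v+1)).symm)
          exact ⟨2*v+1, by omega, hm', hk'⟩
        · exfalso
          have hid := det_odd (i := 2*v+1) ⟨v, by ring⟩
          rw [show 2*v+1+2 = 2*v+3 from rfl, show 2*v+1+1 = 2*v+2 from rfl] at hid
          have h1' := Nat.mul_le_mul_left (Nat.fib (2*v+1)) (Nat.succ_le_of_lt h6)
          have h2' := Nat.mul_le_mul_left (Nat.fib (2*v+2)) (Nat.succ_le_of_lt hlt2)
          have h3' : k * (Nat.fib (2*v+3) * Nat.fib (2*v+1))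
              = k * (Nat.fib (2*v+2) * Nat.fib (2*v+2)) + k := by rw [hid]; ring
          have hfin : Nat.fib (2*v+1) + Nat.fib (2*v+2) ≤ k := by nlinarith [h1', h2', h3']
          have hf1 : 1 ≤ Nat.fib (2*v+1) := Nat.fib_pos.mpr (by omega)
          omega
      · have hjlt : j < 2*v+1 := lt_of_le_of_ne hjle hcase
        obtain ⟨c, hc⟩ := hjodd
        have hj2 : j + 2 ≤ 2*v+1 := by omega
        have hnP : ¬ P (j+2) := Nat.findGreatest_is_greatest (by omega) hj2
        have hk3 : k < Nat.fib (j+2) := by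
          by_contra hcon; push_neg at hcon
          exact hnP ⟨⟨c+1, by omega⟩, hcon⟩
        have hyL : ((Nat.fib (j+1), Nat.fib j) : ℕ×ℕ) ∈ Lset ξ := by
          exact ⟨pair_ne0 (Nat.fib_pos.mpr (by omega)), low j ⟨c, hc⟩ (by omega)⟩
        have h5 : Nat.fib (j+1) * k ≤ m * Nat.fib j := hmin _ hyL hjk
        have h6 : Nat.fib (j+1) * m < Nat.fib (j+2) * k := by
          refine cross_lt hk1 hxlt' ?_
          exact up (j+1) ⟨c+1, by omega⟩ (by omega)
        rcases eq_or_lt_of_le h5 with heq | hlt2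
        · obtain ⟨hm', hk'⟩ := cross_eq heq.symm hcop ((Nat.fib_coprime_fib_succ j).symm)
          exact ⟨j, by omega, hm', hk'⟩
        · exfalso
          have hid := det_odd (i := j) ⟨c, hc⟩
          have h1' := Nat.mul_le_mul_left (Nat.fib j) (Nat.succ_le_of_lt h6)
          have h2' := Nat.mul_le_mul_left (Nat.fib (j+1)) (Nat.succ_le_of_lt hlt2)
          have h3' : k * (Nat.fib (j+2) * Nat.fib j)
              = k * (Nat.fib (j+1) * Nat.fib (j+1)) + k := by rw [hid]; ring
          have hfin : Nat.fib j + Nat.fib (j+1) ≤ k := by nlinarith [h1', h2', h3']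
          have hfib2 : Nat.fib (j+2) = Nat.fib j + Nat.fib (j+1) := Nat.fib_add_two
          omega
  · rintro ⟨i, hin, rfl, rfl⟩
    rcases Nat.even_or_odd i with hie | hio
    · left
      refine ⟨⟨pair_ne0 (Nat.fib_pos.mpr (by omega)), (Nat.fib_coprime_fib_succ i).symm⟩,
        ⟨pair_ne0 (Nat.fib_pos.mpr (by omega)), up i hie hin⟩, ?_⟩
      · intro y hy hy1
        simp only at hy1 ⊢
        by_contra hcon; push_neg at hcon
        obtain ⟨s, rfl⟩ : ∃ s, i = 2*s := by
          obtain ⟨c, hc⟩ := hie; exact ⟨c, by omega⟩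
        obtain ⟨hy0, hylt⟩ := hy
        rcases Nat.eq_zero_or_pos s with hs0 | hs1
        · subst hs0
          norm_num [Nat.fib_zero, Nat.fib_one] at hcon hy1
          have hy2R : (1:ℝ) ≤ (y.2:ℝ) := by exact_mod_cast hcon
          have hy1R : (y.1:ℝ) ≤ 1 := by exact_mod_cast hy1
          have hyx : (1:ℝ)*ξ ≤ (y.2:ℝ)*ξ := mul_le_mul_of_nonneg_right hy2R (by linarith)
          have hylt2 : (y.2:ℝ) * ξ < (y.1:ℝ) := hylt
          linarith
        · have hB : y.2 * Nat.fib (2*s) < y.1 * Nat.fib (2*s-1) := by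
            refine cross_lt (Nat.fib_pos.mpr (by omega)) ?_ hylt
            have := low (2*s-1) ⟨s-1, by omega⟩ (by omega)
            rw [show 2*s-1+1 = 2*s from by omega] at this
            exact this
          have hid := det_odd (i := 2*s-1) ⟨s-1, by omega⟩
          rw [show 2*s-1+2 = 2*s+1 from by omega, show 2*s-1+1 = 2*s from by omega] at hid
          have hf1 : 1 ≤ Nat.fib (2*s) := Nat.fib_pos.mpr (by omega)
          have h1' := Nat.mul_le_mul_left (Nat.fib (2*s)) (Nat.succ_le_of_lt hcon)
          have h2' := Nat.mul_le_mul_left (Nat.fib (2*s+1)) (Nat.succ_le_of_lt hB)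
          have h3' : y.1 * (Nat.fib (2*s+1) * Nat.fib (2*s-1))
              = y.1 * (Nat.fib (2*s) * Nat.fib (2*s)) + y.1 := by rw [hid]; ring
          have hfin : Nat.fib (2*s) + Nat.fib (2*s+1) ≤ y.1 := by nlinarith [h1', h2', h3']
          omega
    · right
      have hile : i ≤ 2*v+1 := by
        obtain ⟨c, hc⟩ := hio; omega
      refine ⟨⟨pair_ne0 (Nat.fib_pos.mpr (by omega)), (Nat.fib_coprime_fib_succ i).symm⟩,
        ⟨pair_ne0 (Nat.fib_pos.mpr (by omega)), low i hio hile⟩, ?_⟩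
      · intro y hy hy2
        simp only at hy2 ⊢
        by_contra hcon; push_neg at hcon
        obtain ⟨hy0, hylt⟩ := hy
        have hy2pos : 0 < y.2 := by
          rcases Nat.eq_zero_or_pos y.2 with h0 | h0
          · exfalso
            rw [h0] at hylt
            simp at hylt
            have : (0:ℝ) ≤ (y.1:ℝ) := by positivity
            linarith
          · exact h0
        have hB : Nat.fib (i+1) * y.1 < Nat.fib (i+2) * y.2 := by
          refine cross_lt hy2pos hylt ?_
          obtain ⟨c, hc⟩ := hio
          exact up (i+1) ⟨c+1, by omega⟩ (by omega)
        have hid := det_odd hio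
        have h1' := Nat.mul_le_mul_left (Nat.fib i) (Nat.succ_le_of_lt hB)
        have h2' := Nat.mul_le_mul_left (Nat.fib (i+1)) (Nat.succ_le_of_lt hcon)
        have h3' : y.2 * (Nat.fib (i+2) * Nat.fib i)
            = y.2 * (Nat.fib (i+1) * Nat.fib (i+1)) + y.2 := by rw [hid]; ring
        have hfin : Nat.fib i + Nat.fib (i+1) ≤ y.2 := by nlinarith [h1', h2', h3']
        have hf1 : 1 ≤ Nat.fib (i+1) := Nat.fib_pos.mpr (by omega)
        omega
end

section
/- There exists a constant C > 0 with the following property: for every even integer n ≥ 2 and all primes p, q satisfying hₙ/hₙ₋₁ < (log q)/(log p) < hₙ₊₁/hₙ, the set 𝒱 = {(x₁,…,xₙ₊₁) ∈ ℕ₀^{n+1} : Σᵢ₌₁^{n+1} xᵢ·hᵢ = hₙ₊₁ and Σᵢ₌₁^{n+1} xᵢ·hᵢ₋₁ = hₙ} of factorization vectors of αₙ = p^{hₙ₊₁}/q^{hₙ} is finite and satisfies log(#𝒱) ≤ C·(log hₙ₊₁)². -/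
open Real Finset

/-!
A solution of `∑ xᵢ hᵢ = hₙ₊₁` has every coordinate at most `hₙ₊₁`, since all `hᵢ ≥ 1`;
so `#𝒱 ≤ (hₙ₊₁ + 1)^(n+1)` and `log #𝒱 ≤ (n + 1) log (hₙ₊₁ + 1)`. The Fibonacci numbers
grow exponentially, `2^k ≤ h₂ₖ₊₁`, hence `n = O(log hₙ₊₁)` and the bound is `O((log hₙ₊₁)²)`.
-/

lemma two_pow_le_fib_two_mul_add_one (k : ℕ) : 2 ^ k ≤ Nat.fib (2 * k + 1) := by
  induction k with
  | zero => simp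
  | succ k ih =>
    have hmono : Nat.fib (2 * k + 1) ≤ Nat.fib (2 * k + 2) := Nat.fib_mono (by omega)
    have hrec : Nat.fib (2 * (k + 1) + 1) = Nat.fib (2 * k + 1) + Nat.fib (2 * k + 2) := by
      rw [show 2 * (k + 1) + 1 = 2 * k + 1 + 2 by ring, Nat.fib_add_two]
    rw [pow_succ]
    omega

lemma two_mul_le_three_mul_log_fib (k : ℕ) :
    (2 * k : ℝ) ≤ 3 * Real.log (Nat.fib (2 * k + 1)) := by
  have h : k * Real.log 2 ≤ Real.log (Nat.fib (2 * k + 1)) := by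
    rw [← Real.log_pow]
    exact Real.log_le_log (by positivity) (by exact_mod_cast two_pow_le_fib_two_mul_add_one k)
  -- `2 / log 2 ≈ 2.885 < 3`
  nlinarith [Real.log_two_gt_d9, Nat.cast_nonneg (α := ℝ) k]

lemma log_add_one_le_two_mul_log {x : ℝ} (hx : 2 ≤ x) : Real.log (x + 1) ≤ 2 * Real.log x := by
  have h := Real.log_le_log (by linarith) (show x + 1 ≤ x ^ 2 by nlinarith)
  rwa [Real.log_pow, Nat.cast_ofNat] at h

lemma le_of_sum_mul_eq {ι : Type*} [Fintype ι] {x a : ι → ℕ} {N : ℕ} (ha : ∀ i, 0 < a i)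
    (h : ∑ i, x i * a i = N) (i : ι) : x i ≤ N :=
  calc x i ≤ x i * a i := Nat.le_mul_of_pos_right _ (ha i)
    _ ≤ ∑ j, x j * a j := single_le_sum (fun j _ => Nat.zero_le (x j * a j)) (mem_univ i)
    _ = N := h

section BoundedVectors

variable {ι : Type*} [Fintype ι] [DecidableEq ι] {S : Set (ι → ℕ)} {N : ℕ}

lemma subset_piFinset_range (h : ∀ x ∈ S, ∀ i, x i ≤ N) :
    S ⊆ Fintype.piFinset fun _ : ι => range (N + 1) := fun x hx => by
  simpa [Fintype.mem_piFinset, Nat.lt_succ_iff] using h x hx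

lemma finite_of_forall_le (h : ∀ x ∈ S, ∀ i, x i ≤ N) : S.Finite :=
  (Finset.finite_toSet _).subset (subset_piFinset_range h)

lemma ncard_le_of_forall_le (h : ∀ x ∈ S, ∀ i, x i ≤ N) :
    S.ncard ≤ (N + 1) ^ Fintype.card ι :=
  calc S.ncard ≤ (↑(Fintype.piFinset fun _ : ι => range (N + 1)) : Set (ι → ℕ)).ncard :=
        Set.ncard_le_ncard (subset_piFinset_range h) (Finset.finite_toSet _)
    _ = (N + 1) ^ Fintype.card ι := by
      rw [Set.ncard_coe_finset, Fintype.card_piFinset]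
      simp

end BoundedVectors

lemma log_le_mul_log_of_le_pow {m B d : ℕ} (h : m ≤ B ^ d) :
    Real.log m ≤ d * Real.log B := by
  rcases Nat.eq_zero_or_pos m with rfl | hm
  · simpa using mul_nonneg (Nat.cast_nonneg d) (Real.log_natCast_nonneg B)
  · rw [← Real.log_pow]
    exact Real.log_le_log (by exact_mod_cast hm) (by exact_mod_cast h)

/-- Theorem `GoldenBound`: there is `C > 0` such that for every even
`n ≥ 2` and primes `p`, `q` with `hₙ/hₙ₋₁ < log q / log p < hₙ₊₁/hₙ`, the set `𝒱` of
factorization vectors of `αₙ = p^{hₙ₊₁}/q^{hₙ}` is finite with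
`log #𝒱 ≤ C (log hₙ₊₁)²`. -/
theorem stmt_6 : ∃ C : ℝ, 0 < C ∧ ∀ n : ℕ, 2 ≤ n → Even n →
    ∀ p q : ℕ, p.Prime → q.Prime →
      (Nat.fib n : ℝ) / (Nat.fib (n - 1) : ℝ) < Real.log q / Real.log p →
      Real.log q / Real.log p < (Nat.fib (n + 1) : ℝ) / (Nat.fib n : ℝ) →
      ({x : Fin (n + 1) → ℕ | (∑ i, x i * Nat.fib (i.val + 1) = Nat.fib (n + 1)) ∧
          (∑ i, x i * Nat.fib i.val = Nat.fib n)}.Finite ∧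
        Real.log (({x : Fin (n + 1) → ℕ |
            (∑ i, x i * Nat.fib (i.val + 1) = Nat.fib (n + 1)) ∧
            (∑ i, x i * Nat.fib i.val = Nat.fib n)}.ncard : ℝ)) ≤
          C * (Real.log (Nat.fib (n + 1) : ℝ)) ^ 2) := by
  refine ⟨16, by norm_num, fun n hn heven p q _ _ _ _ => ?_⟩
  obtain ⟨k, rfl⟩ := even_iff_two_dvd.1 heven
  set F := Nat.fib (2 * k + 1)
  set V : Set (Fin (2 * k + 1) → ℕ) := {x | (∑ i, x i * Nat.fib (i.val + 1) = F) ∧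
    (∑ i, x i * Nat.fib i.val = Nat.fib (2 * k))}
  have hbound : ∀ x ∈ V, ∀ i, x i ≤ F := fun x hx =>
    le_of_sum_mul_eq (fun i => Nat.fib_pos.2 i.val.succ_pos) hx.1
  refine ⟨finite_of_forall_le hbound, ?_⟩
  have hlogV : Real.log V.ncard ≤ (2 * k + 1) * Real.log (F + 1) := by
    simpa using log_le_mul_log_of_le_pow (ncard_le_of_forall_le hbound)
  have hF : (2 : ℝ) ≤ F := by exact_mod_cast (Nat.fib_mono (by omega) : Nat.fib 3 ≤ F)
  have hL : 0.69 ≤ Real.log F :=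
    (Real.log_two_gt_d9.trans_le (Real.log_le_log (by norm_num) hF)).le.trans' (by norm_num)
  calc Real.log V.ncard ≤ (2 * k + 1) * Real.log (F + 1) := hlogV
    _ ≤ (3 * Real.log F + 1) * (2 * Real.log F) :=
      mul_le_mul (by linarith [two_mul_le_three_mul_log_fib k]) (log_add_one_le_two_mul_log hF)
        (Real.log_nonneg (by linarith)) (by linarith)
    _ ≤ 16 * Real.log F ^ 2 := by nlinarith
end

section
/- Let p and q be distinct primes and set ξ = log q / log p (a positive irrational real number). Assume (a,b) is an upper or lower best approximation for ξ, and set α = p^a/q^b. Let (a₁,b₁),…,(a_N,b_N) enumerate without repetition the upper and lower best approximations (m,k) for ξ with m ≤ a and k ≤ b, let 𝒱(α) = {x ∈ ℕ₀^N : Σᵢ xᵢaᵢ = a and Σᵢ xᵢbᵢ = b}, and for x ∈ ℕ₀^N and t > 0 set f_x(t) = (Σᵢ xᵢ·(log max(p^{aᵢ}, q^{bᵢ}))^t)^{1/t}. Suppose S ⊆ 𝒱(α) satisfies min_{x∈S} f_x(t) = min_{x∈𝒱(α)} f_x(t) for every t > 0. Then the set Vert(S) of vertices (extreme points) of the convex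 hull of S in ℝ^N also satisfies min_{x∈Vert(S)} f_x(t) = min_{x∈𝒱(α)} f_x(t) for every t > 0. -/
open Real Finset

/-- The measure function of a factorization vector `x`:
`f_x(t) = (Σᵢ xᵢ (log max(p^{aᵢ}, q^{bᵢ}))^t)^{1/t}`. -/
noncomputable def fvec (p q : ℕ) {N : ℕ} (ab : Fin N → ℕ × ℕ) (x : Fin N → ℕ)
    (t : ℝ) : ℝ :=
  (∑ i, (x i : ℝ) *
    (Real.log ((max (p ^ (ab i).1) (q ^ (ab i).2) : ℕ) : ℝ)) ^ t) ^ (1 / t)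

/-- The set `𝒱(α)` of factorization vectors. -/
def Vvec (a b : ℕ) {N : ℕ} (ab : Fin N → ℕ × ℕ) : Set (Fin N → ℕ) :=
  {x | (∑ i, x i * (ab i).1 = a) ∧ (∑ i, x i * (ab i).2 = b)}

/-- The embedding of integer vectors into `ℝ^N`. -/
def embed {N : ℕ} (x : Fin N → ℕ) : Fin N → ℝ := fun i => (x i : ℝ)

/-- The set of vertices of the convex hull of `S`: points `x ∈ S` not in the convex
hull of `S \ {x}`. -/
def VertSet {N : ℕ} (S : Set (Fin N → ℕ)) : Set (Fin N → ℕ) :=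
  {x | x ∈ S ∧ embed x ∉ convexHull ℝ (embed '' (S \ {x}))}

/-!
For fixed `t > 0`, `f_x(t)^t` is a linear form in `x` with nonnegative coefficients, and `S` is
finite because no best approximation is `(0,0)`. A linear form attains its minimum over a finite
set at a vertex of the convex hull: by Krein–Milman, the exposed face of minimisers of the hull
has an extreme point, which is extreme in the hull and therefore a point of `S` outside the hull
of the others. Since `u ↦ u^(1/t)` is monotone, that vertex also minimises `f_x(t)` over `S`.
-/

theorem notMem_convexHull_sdiff_of_mem_extremePoints_convexHull {𝕜 E : Type*} [Field 𝕜]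
    [LinearOrder 𝕜] [IsStrictOrderedRing 𝕜] [AddCommGroup E] [Module 𝕜 E] {s : Set E} {x : E}
    (hx : x ∈ (convexHull 𝕜 s).extremePoints 𝕜) : x ∉ convexHull 𝕜 (s \ {x}) := fun hmem =>
  ((convex_convexHull 𝕜 s).mem_extremePoints_iff_mem_sdiff_convexHull_sdiff.1 hx).2
    (convexHull_mono (Set.sdiff_subset_sdiff_left (subset_convexHull 𝕜 s)) hmem)

theorem Set.Finite.exists_isMinOn_notMem_convexHull_sdiff {E : Type*} [AddCommGroup E]
    [Module ℝ E] [TopologicalSpace E] [T2Space E] [IsTopologicalAddGroup E] [ContinuousSMul ℝ E]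
    [LocallyConvexSpace ℝ E] {s : Set E} (hs : s.Finite)
    (hne : s.Nonempty) (l : StrongDual ℝ E) :
    ∃ x ∈ s, x ∉ convexHull ℝ (s \ {x}) ∧ IsMinOn l s x := by
  have hK : IsCompact (convexHull ℝ s) := hs.isCompact_convexHull (𝕜 := ℝ)
  obtain ⟨y, hyK, hy⟩ := hK.exists_isMinOn (hne.mono (subset_convexHull ℝ s))
    l.continuous.continuousOn
  have hF : IsExposed ℝ (convexHull ℝ s) ((-l).toExposed (convexHull ℝ s)) :=
    ContinuousLinearMap.toExposed.isExposed
  obtain ⟨x, hx⟩ := (hF.isCompact hK).extremePoints_nonempty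
    ⟨y, hyK, fun z hz => neg_le_neg (hy hz)⟩
  have hxK := hF.isExtreme.extremePoints_subset_extremePoints hx
  refine ⟨x, extremePoints_convexHull_subset hxK,
    notMem_convexHull_sdiff_of_mem_extremePoints_convexHull hxK, fun z hz => ?_⟩
  exact neg_le_neg_iff.1 (hx.1.2 z (subset_convexHull ℝ s hz))

theorem embed_injective (N : ℕ) : Function.Injective (embed (N := N)) := fun x y h =>
  funext fun i => by simpa [embed] using congrFun h i

theorem exists_mem_vertSet_isMinOn {N : ℕ} {S : Set (Fin N → ℕ)} (hS : S.Finite)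
    (hne : S.Nonempty) (l : StrongDual ℝ (Fin N → ℝ)) :
    ∃ v ∈ VertSet S, IsMinOn (l ∘ embed) S v := by
  obtain ⟨_, ⟨v, hvS, rfl⟩, hv, hmin⟩ :=
    (hS.image embed).exists_isMinOn_notMem_convexHull_sdiff (hne.image embed) l
  rw [← Set.image_singleton, ← Set.image_sdiff (embed_injective N)] at hv
  exact ⟨v, ⟨hvS, hv⟩, fun x hx => hmin (Set.mem_image_of_mem embed hx)⟩

theorem finite_Vvec {a b N : ℕ} {ab : Fin N → ℕ × ℕ} (hab : ∀ i, ab i ≠ (0, 0)) :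
    (Vvec a b ab).Finite := by
  refine (Set.finite_Iic (fun _ => a + b)).subset fun x ⟨ha, hb⟩ i => ?_
  have hpos : 0 < (ab i).1 + (ab i).2 := by
    by_contra h
    exact hab i (Prod.ext (by omega) (by omega))
  calc x i ≤ x i * ((ab i).1 + (ab i).2) := Nat.le_mul_of_pos_right _ hpos
    _ = x i * (ab i).1 + x i * (ab i).2 := Nat.mul_add _ _ _
    _ ≤ a + b := by
      rw [← ha, ← hb]
      exact add_le_add (Finset.single_le_sum (f := fun j => x j * (ab j).1)
        (fun _ _ => Nat.zero_le _) (Finset.mem_univ i))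
        (Finset.single_le_sum (f := fun j => x j * (ab j).2)
        (fun _ _ => Nat.zero_le _) (Finset.mem_univ i))

theorem BestApprox.ne_zero {ξ : ℝ} {x : ℕ × ℕ} (h : BestApprox ξ x) : x ≠ (0, 0) :=
  h.elim (fun h => h.1.1) (fun h => h.1.1)

noncomputable def fvecForm (p q : ℕ) {N : ℕ} (ab : Fin N → ℕ × ℕ) (t : ℝ) :
    StrongDual ℝ (Fin N → ℝ) :=
  ∑ i, (Real.log ((max (p ^ (ab i).1) (q ^ (ab i).2) : ℕ) : ℝ)) ^ t •
    ContinuousLinearMap.proj i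

theorem fvec_eq_fvecForm (p q : ℕ) {N : ℕ} (ab : Fin N → ℕ × ℕ) (x : Fin N → ℕ) (t : ℝ) :
    fvec p q ab x t = fvecForm p q ab t (embed x) ^ (1 / t) := by
  simp only [fvec, fvecForm, embed, FunLike.coe_sum, Finset.sum_apply,
    FunLike.coe_smul, Pi.smul_apply, ContinuousLinearMap.proj_apply, smul_eq_mul,
    mul_comm]

theorem fvecForm_embed_nonneg {p : ℕ} (hp : 0 < p) (q : ℕ) {N : ℕ} (ab : Fin N → ℕ × ℕ)
    (x : Fin N → ℕ) (t : ℝ) : 0 ≤ fvecForm p q ab t (embed x) := by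
  have hlog : ∀ i, 0 ≤ Real.log ((max (p ^ (ab i).1) (q ^ (ab i).2) : ℕ) : ℝ) := fun i =>
    Real.log_nonneg (by exact_mod_cast (Nat.one_le_pow _ _ hp).trans (le_max_left _ _))
  simp only [fvecForm, embed, FunLike.coe_sum, Finset.sum_apply,
    FunLike.coe_smul, Pi.smul_apply, ContinuousLinearMap.proj_apply, smul_eq_mul]
  exact Finset.sum_nonneg fun i _ => mul_nonneg (Real.rpow_nonneg (hlog i) t) (Nat.cast_nonneg _)

theorem csInf_image_eq_of_isMinOn {α β : Type*} [ConditionallyCompleteLinearOrder β]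
    {f : α → β} {s t : Set α} (hts : t ⊆ s) {v : α} (hv : v ∈ t) (hmin : IsMinOn f s v) :
    sInf (f '' t) = sInf (f '' s) := by
  have hleast : ∀ u ⊆ s, v ∈ u → IsLeast (f '' u) (f v) := fun u hus hvu =>
    ⟨Set.mem_image_of_mem f hvu, Set.forall_mem_image.2 fun _ hy => hmin (hus hy)⟩
  rw [(hleast t hts hv).csInf_eq, (hleast s subset_rfl (hts hv)).csInf_eq]

theorem stmt_7_general (p q : ℕ) (hp : p.Prime) (ξ : ℝ) (a b : ℕ) (N : ℕ) (ab : Fin N → ℕ × ℕ)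
    (hmem : ∀ i, BestApprox ξ (ab i) ∧ (ab i).1 ≤ a ∧ (ab i).2 ≤ b)
    (S : Set (Fin N → ℕ)) (hS : S ⊆ Vvec a b ab)
    (hmin : ∀ t : ℝ, 0 < t →
      sInf ((fun x => fvec p q ab x t) '' S) =
        sInf ((fun x => fvec p q ab x t) '' Vvec a b ab)) :
    ∀ t : ℝ, 0 < t →
      sInf ((fun x => fvec p q ab x t) '' VertSet S) =
        sInf ((fun x => fvec p q ab x t) '' Vvec a b ab) := by
  intro t ht
  rw [← hmin t ht]
  rcases S.eq_empty_or_nonempty with rfl | hne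
  · simp [VertSet]
  have hSfin : S.Finite := (finite_Vvec fun i => (hmem i).1.ne_zero).subset hS
  obtain ⟨v, hv, hvmin⟩ := exists_mem_vertSet_isMinOn hSfin hne (fvecForm p q ab t)
  refine csInf_image_eq_of_isMinOn (fun x hx => hx.1) hv fun x hx => ?_
  simp only [Set.mem_ofPred_eq, fvec_eq_fvecForm]
  exact Real.rpow_le_rpow (fvecForm_embed_nonneg hp.pos q ab v t) (hvmin hx) (by positivity)

/-- Theorem `ConvexHulls`: if `S ⊆ 𝒱(α)` is an infimum set for `α`, then
`Vert(S)` is also an infimum set for `α`. -/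
theorem stmt_7 (p q : ℕ) (hp : p.Prime) (hq : q.Prime) (hpq : p ≠ q)
    (ξ : ℝ) (hξ : ξ = Real.log q / Real.log p)
    (a b : ℕ) (hba : BestApprox ξ (a, b))
    (N : ℕ) (ab : Fin N → ℕ × ℕ) (hinj : Function.Injective ab)
    (hmem : ∀ i, BestApprox ξ (ab i) ∧ (ab i).1 ≤ a ∧ (ab i).2 ≤ b)
    (hall : ∀ y : ℕ × ℕ, BestApprox ξ y → y.1 ≤ a → y.2 ≤ b → ∃ i, ab i = y)
    (S : Set (Fin N → ℕ)) (hS : S ⊆ Vvec a b ab)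
    (hmin : ∀ t : ℝ, 0 < t →
      sInf ((fun x => fvec p q ab x t) '' S) =
        sInf ((fun x => fvec p q ab x t) '' Vvec a b ab)) :
    ∀ t : ℝ, 0 < t →
      sInf ((fun x => fvec p q ab x t) '' VertSet S) =
        sInf ((fun x => fvec p q ab x t) '' Vvec a b ab) :=
  stmt_7_general p q hp ξ a b N ab hmem S hS hmin
end

section
/- Let ξ be a positive irrational real number with ξ > 1. Then 𝒢 ∩ 𝒰₁(ξ) = 𝒢 ∩ 𝒰₂(ξ). -/
open Real Finset

/-- Proposition `Relations` (ii): if `ξ > 1` then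
`𝒢 ∩ 𝒰₁(ξ) = 𝒢 ∩ 𝒰₂(ξ)`. -/
theorem stmt_10 (ξ : ℝ) (hξ : 1 < ξ) (hirr : Irrational ξ) :
    Gset ∩ U1 ξ = Gset ∩ U2 ξ := by
  have hξ0 : (0:ℝ) < ξ := lt_trans one_pos hξ
  ext x
  obtain ⟨a, b⟩ := x
  simp only [Set.mem_inter_iff, Gset, U1, U2, Uset, Set.mem_setOf_eq]
  constructor
  · rintro ⟨hg, ⟨hne, hx⟩, h1⟩
    refine ⟨hg, ⟨hne, hx⟩, ?_⟩
    rintro ⟨m, n⟩ ⟨hyne, hy⟩ hn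
    by_cases hm : m ≤ a
    · exact h1 (m, n) ⟨hyne, hy⟩ hm
    · exact le_trans (Nat.mul_le_mul_left a hn) (Nat.mul_le_mul_right b (le_of_not_ge hm))
  · rintro ⟨hg, ⟨hne, hx⟩, h2⟩
    refine ⟨hg, ⟨hne, hx⟩, ?_⟩
    rintro ⟨m, n⟩ ⟨hyne, hy⟩ hm
    by_cases hn : n ≤ b
    · exact h2 (m, n) ⟨hyne, hy⟩ hn
    · exfalso
      push_neg at hn
      rcases Nat.eq_zero_or_pos b with hb | hb
      · subst hb
        have ha1 : a = 1 := by
          have := hg.2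
          simpa [Nat.coprime_zero_right] using this
        have hn1 : (1:ℝ) ≤ (n:ℝ) := by exact_mod_cast hn
        have hm1 : (m:ℝ) ≤ 1 := by exact_mod_cast (ha1 ▸ hm)
        nlinarith
      · set a0 : ℕ := ⌊(b:ℝ) * ξ⌋₊ + 1 with ha0
        have ha0U : ((a0, b) : ℕ × ℕ) ≠ (0,0) := by simp [ha0]
        have hlt : (b:ℝ) * ξ < a0 := by
          push_cast [ha0]
          exact Nat.lt_floor_add_one _
        have hle : a * b ≤ a0 * b := h2 (a0, b) ⟨ha0U, hlt⟩ le_rfl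
        have haa0 : a ≤ a0 := Nat.le_of_mul_le_mul_right hle hb
        have h1 : (a:ℝ) ≤ (b:ℝ) * ξ + 1 := by
          have hle' : (a:ℝ) ≤ (a0:ℝ) := by exact_mod_cast haa0
          have hfl : (⌊(b:ℝ)*ξ⌋₊ : ℝ) ≤ (b:ℝ)*ξ := Nat.floor_le (by positivity)
          push_cast [ha0] at hle'
          linarith
        have hbn : (b:ℝ) + 1 ≤ (n:ℝ) := by exact_mod_cast hn
        have hma : (m:ℝ) ≤ (a:ℝ) := by exact_mod_cast hm
        nlinarith
end

section
/- Let ξ be a positive irrational real number with ξ < 1. Then 𝒢 ∩ ℒ₁(ξ) = 𝒢 ∩ ℒ₂(ξ). -/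
open Real Finset

/-- Proposition `Relations` (iii): if `0 < ξ < 1` then
`𝒢 ∩ ℒ₁(ξ) = 𝒢 ∩ ℒ₂(ξ)`. -/
theorem stmt_11 (ξ : ℝ) (hpos : 0 < ξ) (hξ : ξ < 1) (hirr : Irrational ξ) :
    Gset ∩ L1 ξ = Gset ∩ L2 ξ := by
  classical
  ext x
  obtain ⟨a, b⟩ := x
  simp only [Set.mem_inter_iff, L1, L2, Set.mem_setOf_eq]
  constructor
  · rintro ⟨hg, hL, h1⟩
    refine ⟨hg, hL, ?_⟩
    rintro ⟨m0, n0⟩ hy hn2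
    by_contra hcon
    push_neg at hcon
    -- hcon : a * n0 < m0 * b  (goal was m0 * b ≤ a * n0)
    -- predicate on denominators
    have hQ : ∃ n : ℕ, n ≤ b ∧ ∃ m, a * n < m * b ∧ (m : ℝ) < n * ξ :=
      ⟨n0, hn2, m0, hcon, hy.2⟩
    set Q : ℕ → Prop := fun n => n ≤ b ∧ ∃ m, a * n < m * b ∧ (m : ℝ) < n * ξ with hQdef
    have hQ' : ∃ n, Q n := hQ
    obtain ⟨⟨hnb, m, hamb, hmn⟩, hmin⟩ : Q (Nat.find hQ') ∧
        ∀ k < Nat.find hQ', ¬ Q k := ⟨Nat.find_spec hQ', fun k hk => Nat.find_min hQ' hk⟩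
    set n := Nat.find hQ' with hn
    -- basic facts
    have hn0 : 0 < n := by
      rcases Nat.eq_zero_or_pos n with h | h
      · exfalso
        rw [h] at hmn
        push_cast at hmn
        nlinarith
      · exact h
    have hma : a < m := by
      by_contra hle
      push_neg at hle
      have hmem : ((m, n) : ℕ × ℕ) ∈ Lset ξ := by
        refine ⟨?_, hmn⟩
        intro h
        rw [Prod.mk.injEq] at h
        omega
      have := h1 (m, n) hmem hle
      simp only at this
      omega
    have hmltn : m < n := by
      have : (m : ℝ) < (n : ℝ) := by
        calc (m : ℝ) < n * ξ := hmn
        _ < n * 1 := by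
            apply mul_lt_mul_of_pos_left hξ
            exact_mod_cast hn0
        _ = n := by ring
      exact_mod_cast this
    have hn2' : 2 ≤ n := by omega
    -- coprimality of m n
    have hco : Nat.Coprime m n := by
      by_contra hnc
      set d := Nat.gcd m n with hd
      have hd0 : 0 < d := Nat.gcd_pos_of_pos_right m hn0
      have hd1 : d ≠ 1 := fun h => hnc h
      have hd2 : 2 ≤ d := by omega
      have hdm : d ∣ m := Nat.gcd_dvd_left m n
      have hdn : d ∣ n := Nat.gcd_dvd_right m n
      obtain ⟨m', hm'⟩ := hdm
      obtain ⟨n', hn'⟩ := hdn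
      have hn'0 : 0 < n' := by
        rcases Nat.eq_zero_or_pos n' with h | h
        · exfalso; rw [h, Nat.mul_zero] at hn'; omega
        · exact h
      have hn'lt : n' < n := by
        have h1n : 1 * n' < d * n' := (Nat.mul_lt_mul_right hn'0).mpr (by omega)
        omega
      apply hmin n' hn'lt
      refine ⟨by omega, m', ?_, ?_⟩
      · -- a * n' < m' * b from a * n < m * b
        have h0 : a * (d * n') < (d * m') * b := by rw [← hn', ← hm']; exact hamb
        have h2 : d * (a * n') < d * (m' * b) := by
          rw [show d * (a * n') = a * (d * n') by ring, show d * (m' * b) = d * m' * b by ring]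
          exact h0
        exact lt_of_mul_lt_mul_left h2 (Nat.zero_le d)
      · -- (m' : ℝ) < n' * ξ
        have hdR : (0:ℝ) < (d:ℝ) := by exact_mod_cast hd0
        have : ((d:ℝ) * m') < (d * n') * ξ := by
          push_cast [hm', hn'] at hmn ⊢
          linarith [hmn]
        nlinarith
    -- Bezout: v with m * v = n * u + 1, 1 ≤ v < n
    haveI : NeZero n := ⟨by omega⟩
    set w : ZMod n := (↑((ZMod.unitOfCoprime m hco)⁻¹ : (ZMod n)ˣ) : ZMod n) with hw
    set v : ℕ := w.val with hv
    have hvlt : v < n := ZMod.val_lt w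
    have hmvmod : m * v % n = 1 % n := by
      have h1' : ((m * v : ℕ) : ZMod n) = 1 := by
        push_cast
        rw [hv, ZMod.natCast_val, ZMod.cast_id]
        rw [hw]
        have : ((m : ZMod n)) = (ZMod.unitOfCoprime m hco : ZMod n) := by
          simp [ZMod.coe_unitOfCoprime]
        rw [this]
        exact_mod_cast Units.mul_inv (ZMod.unitOfCoprime m hco)
      have := (ZMod.natCast_eq_natCast_iff (m * v) 1 n).mp (by simpa using h1')
      exact this
    have hmv1 : m * v % n = 1 := by
      rw [hmvmod, Nat.mod_eq_of_lt hn2']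
    have hv1 : 1 ≤ v := by
      rcases Nat.eq_zero_or_pos v with h | h
      · rw [h] at hmv1; simp at hmv1
      · exact h
    set u : ℕ := m * v / n with hu
    have hkey : m * v = n * u + 1 := by
      have h0 := Nat.div_add_mod (m * v) n
      rw [hmv1, ← hu] at h0
      omega
    -- trichotomy on a*v vs u*b
    rcases lt_trichotomy (a * v) (u * b) with hlt | heq | hgt
    · -- (u, v) gives a smaller witness
      apply hmin v hvlt
      refine ⟨by omega, u, hlt, ?_⟩
      -- (u:ℝ) < v * ξ
      have hun : n * u < m * v := by omega
      have hunR : (n : ℝ) * u < (m : ℝ) * v := by exact_mod_cast hun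
      have hvR : (0:ℝ) < v := by exact_mod_cast hv1
      have hnR : (0:ℝ) < n := by exact_mod_cast hn0
      nlinarith [hmn, mul_lt_mul_of_pos_right hmn hvR]
    · -- a*v = u*b forces b ∣ v, contradiction
      have hbav : b ∣ a * v := ⟨u, by rw [heq, Nat.mul_comm]⟩
      have hcb : Nat.Coprime b a := (hg.2).symm
      have hbv : b ∣ v := hcb.dvd_of_dvd_mul_left hbav
      have : b ≤ v := Nat.le_of_dvd (by omega) hbv
      omega
    · -- integer identity gives a ≥ m
      exfalso
      have hmvZ : (m : ℤ) * v = n * u + 1 := by exact_mod_cast hkey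
      have h1' : (1 : ℤ) ≤ (a : ℤ) * v - b * u := by
        have : (u : ℤ) * b < (a : ℤ) * v := by exact_mod_cast hgt
        linarith
      have h2' : (1 : ℤ) ≤ (m : ℤ) * b - n * a := by
        have : (a : ℤ) * n < (m : ℤ) * b := by exact_mod_cast hamb
        linarith
      have hid : (a : ℤ) = (m : ℤ) * ((a : ℤ) * v - b * u) + (u : ℤ) * ((m : ℤ) * b - n * a) := by
        linear_combination (-(a : ℤ)) * hmvZ
      have hma' : (m : ℤ) ≤ (a : ℤ) := by nlinarith [Int.ofNat_nonneg u, Int.ofNat_nonneg m]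
      have : m ≤ a := by exact_mod_cast hma'
      omega
  · rintro ⟨hg, hL, h2⟩
    refine ⟨hg, hL, ?_⟩
    intro y hy h1le
    rcases le_or_gt y.2 b with h | h
    · exact h2 y hy h
    · exact Nat.mul_le_mul h1le h.le
end

section
/- Let ξ be a positive irrational real number and suppose (a,b) ∈ 𝒰(ξ). Then (a,b) is irreducible with respect to ξ if and only if (a,b) ∈ 𝒢 ∩ 𝒰₂(ξ). -/
open Real Finset

/-- A point of `𝒩` is reducible with respect to `ξ` if it is the sum of two points of
`𝒰(ξ)` or the sum of two points of `ℒ(ξ)`. -/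
def IsReducible (ξ : ℝ) (x : ℕ × ℕ) : Prop :=
  ∃ y z : ℕ × ℕ, x = y + z ∧
    ((y ∈ Uset ξ ∧ z ∈ Uset ξ) ∨ (y ∈ Lset ξ ∧ z ∈ Lset ξ))

/-- Lemma `BestApproxes` (i): for `(a,b) ∈ 𝒰(ξ)`, `(a,b)` is irreducible
with respect to `ξ` iff `(a,b) ∈ 𝒢 ∩ 𝒰₂(ξ)`. -/
theorem stmt_12 (ξ : ℝ) (hpos : 0 < ξ) (hirr : Irrational ξ) (a b : ℕ)
    (h : (a, b) ∈ Uset ξ) :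
    ¬ IsReducible ξ (a, b) ↔ (a, b) ∈ Gset ∩ U2 ξ := by
  obtain ⟨hne, hub⟩ := h
  simp only [Set.mem_setOf_eq] at hub
  have ha0 : 0 < a := by
    by_contra hc
    push_neg at hc
    interval_cases a
    have h0 : (0:ℝ) ≤ (b:ℝ) * ξ := by positivity
    simp only [Nat.cast_zero] at hub
    linarith
  constructor
  · intro hirred
    refine ⟨⟨hne, ?_⟩, ⟨⟨hne, hub⟩, ?_⟩⟩
    · -- coprimality
      by_contra hcop
      set g := Nat.gcd a b with hg
      have hga : g ∣ a := Nat.gcd_dvd_left a b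
      have hgb : g ∣ b := Nat.gcd_dvd_right a b
      have hg0 : 0 < g := Nat.gcd_pos_of_pos_left b ha0
      have hgne : g ≠ 1 := hcop
      have hg1 : 1 < g := by omega
      set a' := a / g with ha'
      set b' := b / g with hb'
      have haa : g * a' = a := Nat.mul_div_cancel' hga
      have hbb : g * b' = b := Nat.mul_div_cancel' hgb
      have ha'0 : 0 < a' := Nat.pos_of_ne_zero (fun h0 => by
        rw [h0, Nat.mul_zero] at haa; omega)
      have e1 : (g:ℝ) * (a':ℝ) = (a:ℝ) := by exact_mod_cast haa
      have e2 : (g:ℝ) * (b':ℝ) = (b:ℝ) := by exact_mod_cast hbb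
      have hgr : (0:ℝ) < (g:ℝ) := by exact_mod_cast hg0
      have hkey : (b':ℝ) * ξ < (a':ℝ) := by nlinarith [hub]
      apply hirred
      refine ⟨(a', b'), ((g-1)*a', (g-1)*b'), ?_, Or.inl ⟨⟨?_, ?_⟩, ⟨?_, ?_⟩⟩⟩
      · have h1 : a' + (g-1)*a' = a := by
          calc a' + (g-1)*a' = (1 + (g-1)) * a' := by ring
            _ = g * a' := by congr 1; omega
            _ = a := haa
        have h2 : b' + (g-1)*b' = b := by
          calc b' + (g-1)*b' = (1 + (g-1)) * b' := by ring
            _ = g * b' := by congr 1; omega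
            _ = b := hbb
        simp [Prod.ext_iff, h1, h2]
      · intro hc
        rw [Prod.mk.injEq] at hc
        omega
      · exact hkey
      · intro hc
        rw [Prod.mk.injEq] at hc
        have : (g-1)*a' ≠ 0 := Nat.mul_ne_zero (by omega) (by omega)
        exact this hc.1
      · show (((g-1)*b' : ℕ) : ℝ) * ξ < (((g-1)*a' : ℕ) : ℝ)
        have hgm : (0:ℝ) < ((g:ℝ) - 1) := by
          have : (1:ℝ) < (g:ℝ) := by exact_mod_cast hg1
          linarith
        push_cast [Nat.cast_sub hg0]
        nlinarith [hkey, hgm]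
    · -- U2 property
      intro y hy hyb
      by_contra hlt
      push_neg at hlt
      obtain ⟨hyne, hyu⟩ := hy
      -- hlt : y.1 * b < a * y.2
      have hn0 : 0 < y.2 := by
        rcases Nat.eq_zero_or_pos y.2 with h0 | h0
        · rw [h0] at hlt; omega
        · exact h0
      have hb0 : 0 < b := lt_of_lt_of_le hn0 hyb
      have hma : y.1 < a := by
        have h1 : y.1 * b < a * b := lt_of_lt_of_le hlt (Nat.mul_le_mul_left a hyb)
        exact Nat.lt_of_mul_lt_mul_right h1
      apply hirred
      refine ⟨y, (a - y.1, b - y.2), ?_, Or.inl ⟨⟨hyne, hyu⟩, ⟨?_, ?_⟩⟩⟩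
      · simp [Prod.ext_iff]
        omega
      · intro hc
        rw [Prod.mk.injEq] at hc
        omega
      · show (((b - y.2 : ℕ)) : ℝ) * ξ < (((a - y.1 : ℕ)) : ℝ)
        have hltr : (y.1:ℝ) * b < (a:ℝ) * y.2 := by exact_mod_cast hlt
        have hybr : (y.2:ℝ) ≤ (b:ℝ) := by exact_mod_cast hyb
        have hbr : (0:ℝ) < (b:ℝ) := by exact_mod_cast hb0
        rw [Nat.cast_sub hyb, Nat.cast_sub hma.le]
        nlinarith [hub, hltr, hybr, hbr]
  · rintro ⟨⟨-, hcop⟩, -, hU2⟩ ⟨y, z, hsum, hcase⟩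
    have hsum1 : a = y.1 + z.1 := by
      have := congrArg Prod.fst hsum; simpa using this
    have hsum2 : b = y.2 + z.2 := by
      have := congrArg Prod.snd hsum; simpa using this
    rcases hcase with ⟨⟨hyne, hyu⟩, ⟨hzne, hzu⟩⟩ | ⟨⟨-, hyl⟩, ⟨-, hzl⟩⟩
    · have hy2 : y.2 ≤ b := by omega
      have hz2 : z.2 ≤ b := by omega
      have h1 : a * y.2 ≤ y.1 * b := hU2 y ⟨hyne, hyu⟩ hy2
      have h2 : a * z.2 ≤ z.1 * b := hU2 z ⟨hzne, hzu⟩ hz2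
      have heq : a * y.2 + a * z.2 = y.1 * b + z.1 * b := by
        calc a * y.2 + a * z.2 = a * (y.2 + z.2) := by ring
          _ = a * b := by rw [← hsum2]
          _ = (y.1 + z.1) * b := by rw [← hsum1]
          _ = y.1 * b + z.1 * b := by ring
      have he1 : a * y.2 = y.1 * b := by omega
      have he2 : a * z.2 = z.1 * b := by omega
      rcases Nat.eq_zero_or_pos b with hb0 | hb0
      · -- b = 0 case
        have hy20 : y.2 = 0 := by omega
        have hz20 : z.2 = 0 := by omega
        have hy1 : 0 < y.1 := by
          rcases Nat.eq_zero_or_pos y.1 with h0 | h0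
          · exact absurd (Prod.ext h0 hy20) hyne
          · exact h0
        have hz1 : 0 < z.1 := by
          rcases Nat.eq_zero_or_pos z.1 with h0 | h0
          · exact absurd (Prod.ext h0 hz20) hzne
          · exact h0
        have : a = 1 := by
          have := hcop
          simp only [Nat.Coprime, hb0, Nat.gcd_zero_right] at this
          exact this
        omega
      · -- b > 0 case
        have hbd : b ∣ y.2 := by
          have hdvd : b ∣ a * y.2 := he1 ▸ Dvd.intro y.1 (by ring)
          exact (Nat.Coprime.symm hcop).dvd_of_dvd_mul_left hdvd
        have : y.2 = 0 ∨ y.2 = b := by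
          rcases Nat.eq_zero_or_pos y.2 with h0 | h0
          · exact Or.inl h0
          · exact Or.inr (le_antisymm hy2 (Nat.le_of_dvd h0 hbd))
        rcases this with h0 | h0
        · -- y.2 = 0 forces y.1 = 0
          rw [h0, Nat.mul_zero] at he1
          have hy10 : y.1 = 0 := by
            rcases Nat.eq_zero_or_pos y.1 with h1 | h1
            · exact h1
            · exact absurd he1.symm (by positivity)
          exact hyne (Prod.ext hy10 h0)
        · -- y.2 = b forces z.2 = 0 then z.1 = 0
          have hz20 : z.2 = 0 := by omega
          rw [hz20, Nat.mul_zero] at he2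
          have hz10 : z.1 = 0 := by
            rcases Nat.eq_zero_or_pos z.1 with h1 | h1
            · exact h1
            · exact absurd he2.symm (by positivity)
          exact hzne (Prod.ext hz10 hz20)
    · have : (a:ℝ) < (b:ℝ) * ξ := by
        rw [hsum1, hsum2]
        push_cast
        nlinarith [hyl, hzl]
      linarith
end

section
/- Let ξ be a positive irrational real number and suppose (a,b) ∈ ℒ(ξ). Then (a,b) is irreducible with respect to ξ if and only if (a,b) ∈ 𝒢 ∩ ℒ₁(ξ). -/
open Real Finset

lemma witness_red (ξ : ℝ) (a b m n : ℕ) (hab : (a:ℝ) < (b:ℝ) * ξ)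
    (hmn : (m:ℝ) < (n:ℝ) * ξ) (hm : m ≤ a) (hbad : a * n < m * b) :
    IsReducible ξ (a, b) := by
  have hm1 : 0 < m := Nat.pos_of_ne_zero (by rintro rfl; simp at hbad)
  have hnb : n < b := by
    have h1 : m * n < m * b := lt_of_le_of_lt (Nat.mul_le_mul_right n hm) hbad
    exact Nat.lt_of_mul_lt_mul_left h1
  have hn : n ≤ b := hnb.le
  have hbR : (n:ℝ) < (b:ℝ) := by exact_mod_cast hnb
  have hbadR : (a:ℝ) * n < (m:ℝ) * b := by exact_mod_cast hbad
  have hz : ((a - m : ℕ):ℝ) < ((b - n : ℕ):ℝ) * ξ := by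
    rw [Nat.cast_sub hm, Nat.cast_sub hn]
    by_contra hc
    push_neg at hc
    have t1 : (n:ℝ) * (((b:ℝ) - n) * ξ) ≤ (n:ℝ) * ((a:ℝ) - m) :=
      mul_le_mul_of_nonneg_left hc (Nat.cast_nonneg n)
    have t2 : ((b:ℝ) - n) * m < ((b:ℝ) - n) * ((n:ℝ) * ξ) :=
      mul_lt_mul_of_pos_left hmn (by linarith)
    nlinarith [t1, t2, hbadR]
  refine ⟨(m, n), (a - m, b - n), ?_, Or.inr ⟨⟨?_, hmn⟩, ⟨?_, hz⟩⟩⟩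
  · show (a, b) = (m + (a - m), n + (b - n))
    rw [Nat.add_sub_cancel' hm, Nat.add_sub_cancel' hn]
  · simp only [ne_eq, Prod.mk.injEq, not_and]
    intro hh; omega
  · simp only [ne_eq, Prod.mk.injEq, not_and]
    intro hh; omega

lemma gcd_red (ξ : ℝ) (a b : ℕ) (hab : (a:ℝ) < (b:ℝ) * ξ) (hb : 0 < b)
    (hcop : Nat.gcd a b ≠ 1) : IsReducible ξ (a, b) := by
  have hd0 : 0 < Nat.gcd a b := Nat.gcd_pos_of_pos_right a hb
  obtain ⟨a', ha'⟩ := Nat.gcd_dvd_left a b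
  obtain ⟨b', hb'⟩ := Nat.gcd_dvd_right a b
  obtain ⟨d, hd⟩ : ∃ d, Nat.gcd a b = d := ⟨_, rfl⟩
  rw [hd] at ha' hb' hcop hd0
  clear hd
  obtain ⟨e, rfl⟩ : ∃ e, d = e + 1 := ⟨d - 1, by omega⟩
  have he1 : 1 ≤ e := by omega
  subst ha'
  subst hb'
  have hb'1 : 1 ≤ b' := by
    rcases Nat.eq_zero_or_pos b' with rfl | hh
    · simp at hb
    · exact hh
  push_cast at hab
  have hpos1 : (0:ℝ) < (e:ℝ) + 1 := by positivity
  have heR : (0:ℝ) < (e:ℝ) := by exact_mod_cast he1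
  have ya : (a':ℝ) < (b':ℝ) * ξ := by
    by_contra hc
    push_neg at hc
    nlinarith [mul_le_mul_of_nonneg_left hc hpos1.le]
  have za : ((e * a' : ℕ):ℝ) < ((e * b' : ℕ):ℝ) * ξ := by
    push_cast
    nlinarith [mul_lt_mul_of_pos_left ya heR]
  refine ⟨(a', b'), (e * a', e * b'), ?_, Or.inr ⟨⟨?_, ya⟩, ⟨?_, za⟩⟩⟩
  · show ((e + 1) * a', (e + 1) * b') = (a' + e * a', b' + e * b')
    rw [Prod.mk.injEq]
    exact ⟨by ring, by ring⟩
  · simp only [ne_eq, Prod.mk.injEq, not_and]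
    intro hh; omega
  · simp only [ne_eq, Prod.mk.injEq, not_and]
    intro hh
    have : 1 ≤ e * b' := Nat.mul_le_mul he1 hb'1
    omega

/-- Lemma `BestApproxes` (ii): for `(a,b) ∈ ℒ(ξ)`, `(a,b)` is irreducible
with respect to `ξ` iff `(a,b) ∈ 𝒢 ∩ ℒ₁(ξ)`. -/
theorem stmt_13 (ξ : ℝ) (hpos : 0 < ξ) (hirr : Irrational ξ) (a b : ℕ)
    (h : (a, b) ∈ Lset ξ) :
    ¬ IsReducible ξ (a, b) ↔ (a, b) ∈ Gset ∩ L1 ξ := by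
  obtain ⟨hne, hab0⟩ := h
  have hab : (a:ℝ) < (b:ℝ) * ξ := hab0
  have hb : 0 < b := by
    rcases Nat.eq_zero_or_pos b with h0 | hh
    · exfalso
      rw [h0] at hab
      norm_num at hab
      exact absurd hab (not_lt.mpr (Nat.cast_nonneg a))
    · exact hh
  constructor
  · intro hirred
    refine ⟨⟨hne, ?_⟩, ⟨⟨hne, hab0⟩, ?_⟩⟩
    · by_contra hc
      exact hirred (gcd_red ξ a b hab hb hc)
    · intro y hy hyle
      by_contra hlt
      push_neg at hlt
      obtain ⟨hyne, hylt⟩ := hy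
      exact hirred (witness_red ξ a b y.1 y.2 hab hylt hyle hlt)
  · rintro ⟨⟨-, hcop⟩, ⟨-, hL1⟩⟩ ⟨y, z, hsum, hor⟩
    have h1 : a = y.1 + z.1 := congrArg Prod.fst hsum
    have h2 : b = y.2 + z.2 := congrArg Prod.snd hsum
    rcases hor with ⟨⟨-, hyU⟩, ⟨-, hzU⟩⟩ | ⟨⟨hyne, hyL⟩, ⟨hzne, hzL⟩⟩
    · rw [h1, h2] at hab
      push_cast at hab
      linarith
    · have hy2 : 0 < y.2 := by
        have hyr : (0:ℝ) < (y.2:ℝ) := by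
          nlinarith [hpos, lt_of_le_of_lt (Nat.cast_nonneg y.1) hyL]
        exact_mod_cast hyr
      have hz2 : 0 < z.2 := by
        have hzr : (0:ℝ) < (z.2:ℝ) := by
          nlinarith [hpos, lt_of_le_of_lt (Nat.cast_nonneg z.1) hzL]
        exact_mod_cast hzr
      have hyle : y.1 ≤ a := by omega
      have hzle : z.1 ≤ a := by omega
      have k1 : y.1 * b ≤ a * y.2 := hL1 y ⟨hyne, hyL⟩ hyle
      have k2 : z.1 * b ≤ a * z.2 := hL1 z ⟨hzne, hzL⟩ hzle
      have key : y.1 * b + z.1 * b = a * y.2 + a * z.2 := by rw [h1, h2]; ring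
      have e1 : y.1 * b = a * y.2 := by linarith
      have e2 : z.1 * b = a * z.2 := by linarith
      rcases Nat.eq_zero_or_pos a with ha0 | ha0
      · have hb1 : b = 1 := by
          rw [ha0] at hcop
          simpa [Nat.coprime_zero_left] using hcop
        omega
      · have hdvd : a ∣ y.1 := Nat.Coprime.dvd_of_dvd_mul_right hcop ⟨y.2, e1⟩
        obtain ⟨k, hk⟩ := hdvd
        have hk1 : k = 1 := by
          rcases Nat.eq_zero_or_pos k with rfl | hkp
          · exfalso
            rw [Nat.mul_zero] at hk
            rw [hk, Nat.zero_mul] at e1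
            simp [eq_comm, Nat.mul_eq_zero] at e1
            omega
          · by_contra hne1
            have h2k : 2 ≤ k := by omega
            have hle : a * 2 ≤ a * k := Nat.mul_le_mul_left a h2k
            have : y.1 = a * k := hk
            linarith
        have hy1a : y.1 = a := by rw [hk, hk1, Nat.mul_one]
        have hz1 : z.1 = 0 := by omega
        rw [hz1, Nat.zero_mul] at e2
        simp [eq_comm, Nat.mul_eq_zero] at e2
        omega
end

section
/- Let p and q be distinct primes and set ξ = log q / log p (a positive irrational real number). If (a,b) ∈ 𝒰(ξ), then the following are equivalent: (i) p^a/q^b has no non-trivial biased factorization; (ii) (a,b) is irreducible with respect to ξ; (iii) (a,b) ∈ 𝒢 ∩ 𝒰₂(ξ). Similarly, if (a,b) ∈ ℒ(ξ), then the following are equivalent: (i) p^a/q^b has no non-trivial biased factorization; (ii) (a,b) is irreducible with respect to ξ; (iii) (a,b) ∈ 𝒢 ∩ ℒ₁(ξ). -/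
open Real Finset

/-- A factorization is biased if all numerators exceed the denominators or vice versa. -/
def Biased {N : ℕ} (r s : Fin N → ℕ) : Prop :=
  (∀ n, s n < r n) ∨ (∀ n, r n < s n)

/-- `α` has no non-trivial biased factorization. -/
def NoNontrivialBiased (α : ℚ) : Prop :=
  ¬ ∃ (N : ℕ) (r s : Fin N → ℕ), 2 ≤ N ∧ IsFactorization α r s ∧ Biased r s

/-! Since `n ξ < m ↔ q ^ n < p ^ m`, and since in a factorization of `p ^ a / q ^ b` the
numerators multiply to `p ^ a` and the denominators to `q ^ b`, a non-trivial biased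
factorization is the same thing as a splitting of `(a, b)` into two points on the same side of
the line `x = ξ y`.

For `(a, b) ∈ 𝒰(ξ)`: a proper multiple `g (a', b')` splits as `(a', b') + (g - 1) (a', b')`, and a
point `c ≤ (a, b)` of `𝒰(ξ)` strictly closer to the line (smaller `c₁ - c₂ ξ`) splits off
`(a, b) - c ∈ 𝒰(ξ)`; a witness against `𝒰₂(ξ)` is such a point. Conversely, in a splitting
`y + z` with `y₁/y₂ ≤ z₁/z₂` the mediant gives `y₁/y₂ ≤ a/b`, so `𝒰₂(ξ)` forces `y₁/y₂ = a/b`,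
impossible for coprime `(a, b)` since `0 < y₁ < a`. The case `ℒ(ξ)` is the case `𝒰(ξ⁻¹)` after
swapping coordinates. -/

section HalfPlanes

variable {ξ : ℝ}

lemma add_mem_Lset {x y : ℕ × ℕ} (hx : x ∈ Lset ξ) (hy : y ∈ Lset ξ) : x + y ∈ Lset ξ := by
  refine ⟨fun h => hx.1 (add_eq_zero.1 h).1, ?_⟩
  have := hx.2
  have := hy.2
  simp only [Prod.fst_add, Prod.snd_add, Nat.cast_add]
  linarith

lemma fst_pos_of_mem_Uset (hξ : 0 ≤ ξ) {x : ℕ × ℕ} (hx : x ∈ Uset ξ) : 0 < x.1 := by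
  have := hx.2
  have : (0 : ℝ) ≤ x.2 * ξ := by positivity
  exact_mod_cast (by linarith : (0 : ℝ) < x.1)

lemma mul_mem_Uset_iff {c m n : ℕ} (hc : 0 < c) : (c * m, c * n) ∈ Uset ξ ↔ (m, n) ∈ Uset ξ := by
  have hc' : (0 : ℝ) < c := by exact_mod_cast hc
  simp only [Uset, Set.mem_ofPred_eq, ne_eq, Prod.mk.injEq, mul_eq_zero, hc.ne', false_or,
    Nat.cast_mul, mul_assoc, mul_lt_mul_iff_right₀ hc']

lemma isReducible_of_not_coprime {x : ℕ × ℕ} (hx : x ∈ Uset ξ) (hcop : ¬ Nat.Coprime x.1 x.2) :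
    IsReducible ξ x := by
  obtain ⟨a, b⟩ := x
  have hg : 2 ≤ Nat.gcd a b := by
    have : Nat.gcd a b ≠ 0 := fun h => hx.1 (by simp_all [Nat.gcd_eq_zero_iff])
    have : Nat.gcd a b ≠ 1 := hcop
    omega
  obtain ⟨k, hk⟩ : ∃ k, Nat.gcd a b = k + 2 := ⟨Nat.gcd a b - 2, by omega⟩
  obtain ⟨a', ha⟩ := Nat.gcd_dvd_left a b
  obtain ⟨b', hb⟩ := Nat.gcd_dvd_right a b
  rw [hk] at ha hb
  have hy : (a', b') ∈ Uset ξ := (mul_mem_Uset_iff (by omega)).1 (ha ▸ hb ▸ hx)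
  refine ⟨(a', b'), ((k + 1) * a', (k + 1) * b'), ?_, .inl ⟨hy, (mul_mem_Uset_iff k.succ_pos).2 hy⟩⟩
  rw [ha, hb, Prod.mk_add_mk]
  congr 1 <;> ring

lemma isReducible_of_le_of_sub_mul_lt {x c : ℕ × ℕ} (hc : c ∈ Uset ξ) (hcx : c ≤ x) (hne : c ≠ x)
    (h : (c.1 : ℝ) - c.2 * ξ < x.1 - x.2 * ξ) : IsReducible ξ x := by
  refine ⟨c, x - c, (add_tsub_cancel_of_le hcx).symm, .inl ⟨hc, ?_, ?_⟩⟩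
  · exact fun h => hne (le_antisymm hcx (tsub_eq_zero_iff_le.1 h))
  · have := hc.2
    simp only [Prod.fst_sub, Prod.snd_sub, Nat.cast_sub hcx.1, Nat.cast_sub hcx.2]
    linarith

lemma mem_U2_of_not_isReducible {x : ℕ × ℕ} (hx : x ∈ Uset ξ) (hirr : ¬ IsReducible ξ x) :
    x ∈ U2 ξ := by
  refine ⟨hx, fun y hy hyx₂ => ?_⟩
  by_contra! hlt
  have hyx₁ : y.1 < x.1 := by nlinarith
  have hne : y ≠ x := by rintro rfl; exact lt_irrefl _ (mul_comm y.1 y.2 ▸ hlt)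
  have hmin : (x.1 : ℝ) - x.2 * ξ ≤ y.1 - y.2 * ξ :=
    not_lt.1 fun h => hirr (isReducible_of_le_of_sub_mul_lt hy ⟨hyx₁.le, hyx₂⟩ hne h)
  have hyx₂' : (y.2 : ℝ) ≤ x.2 := by exact_mod_cast hyx₂
  have : (x.1 : ℝ) * y.2 ≤ y.1 * x.2 := by
    linarith [mul_nonneg (Nat.cast_nonneg (α := ℝ) x.2) (sub_nonneg.2 hmin),
      mul_nonneg (sub_nonneg.2 hyx₂') (sub_nonneg.2 hx.2.le)]
  exact hlt.not_ge (by exact_mod_cast this)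

lemma add_notMem_U2 (hξ : 0 ≤ ξ) {y z : ℕ × ℕ} (hy : y ∈ Uset ξ) (hz : z ∈ Uset ξ)
    (hcop : Nat.Coprime (y + z).1 (y + z).2) (hyz : y.1 * z.2 ≤ z.1 * y.2) : y + z ∉ U2 ξ := by
  rintro ⟨-, hU2⟩
  simp only [Prod.fst_add, Prod.snd_add] at hcop hU2
  have hy₁ := fst_pos_of_mem_Uset hξ hy
  have hz₁ := fst_pos_of_mem_Uset hξ hz
  have heq : (y.1 + z.1) * y.2 = y.1 * (y.2 + z.2) :=
    le_antisymm (hU2 y hy (by omega)) (by nlinarith)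
  have hdvd : y.1 + z.1 ∣ y.1 := hcop.dvd_of_dvd_mul_right ⟨y.2, heq.symm⟩
  exact absurd (Nat.le_of_dvd hy₁ hdvd) (by omega)

theorem not_isReducible_iff_mem_Gset_inter_U2 (hξ : 0 ≤ ξ) {x : ℕ × ℕ} (hx : x ∈ Uset ξ) :
    ¬ IsReducible ξ x ↔ x ∈ Gset ∩ U2 ξ := by
  refine ⟨fun hirr => ⟨⟨hx.1, ?_⟩, mem_U2_of_not_isReducible hx hirr⟩, ?_⟩
  · by_contra hcop
    exact hirr (isReducible_of_not_coprime hx hcop)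
  rintro ⟨⟨-, hcop⟩, hU2⟩ ⟨y, z, rfl, ⟨hy, hz⟩ | ⟨hy, hz⟩⟩
  · rcases le_total (y.1 * z.2) (z.1 * y.2) with h | h
    · exact add_notMem_U2 hξ hy hz hcop h hU2
    · rw [add_comm] at hcop hU2
      exact add_notMem_U2 hξ hz hy hcop h hU2
  · exact lt_asymm hx.2 (add_mem_Lset hy hz).2

lemma swap_mem_Uset_inv_iff (hξ : 0 < ξ) {x : ℕ × ℕ} : x.swap ∈ Uset ξ⁻¹ ↔ x ∈ Lset ξ := by
  simp [Uset, Lset, Prod.swap_eq_iff_eq_swap, mul_inv_lt_iff₀ hξ]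

lemma swap_mem_Lset_inv_iff (hξ : 0 < ξ) {x : ℕ × ℕ} : x.swap ∈ Lset ξ⁻¹ ↔ x ∈ Uset ξ := by
  simp [Uset, Lset, Prod.swap_eq_iff_eq_swap, lt_mul_inv_iff₀ hξ]

lemma swap_mem_Gset_iff {x : ℕ × ℕ} : x.swap ∈ Gset ↔ x ∈ Gset := by
  simp [Gset, Prod.swap_eq_iff_eq_swap, Nat.coprime_comm]

lemma swap_mem_U2_inv_iff (hξ : 0 < ξ) {x : ℕ × ℕ} : x.swap ∈ U2 ξ⁻¹ ↔ x ∈ L1 ξ := by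
  simp only [U2, L1, Set.mem_ofPred_eq, swap_mem_Uset_inv_iff hξ]
  rw [Prod.swap_surjective.forall]
  simp only [swap_mem_Uset_inv_iff hξ, Prod.fst_swap, Prod.snd_swap, mul_comm]

lemma IsReducible.inv_swap (hξ : 0 < ξ) {x : ℕ × ℕ} (h : IsReducible ξ x) :
    IsReducible ξ⁻¹ x.swap := by
  obtain ⟨y, z, rfl, h⟩ := h
  refine ⟨y.swap, z.swap, Prod.swap_add y z, ?_⟩
  simp only [swap_mem_Uset_inv_iff hξ, swap_mem_Lset_inv_iff hξ]
  tauto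

lemma isReducible_inv_swap_iff (hξ : 0 < ξ) {x : ℕ × ℕ} :
    IsReducible ξ⁻¹ x.swap ↔ IsReducible ξ x :=
  ⟨fun h => by simpa using h.inv_swap (inv_pos.2 hξ), IsReducible.inv_swap hξ⟩

theorem not_isReducible_iff_mem_Gset_inter_L1 (hξ : 0 < ξ) {x : ℕ × ℕ} (hx : x ∈ Lset ξ) :
    ¬ IsReducible ξ x ↔ x ∈ Gset ∩ L1 ξ := by
  rw [← isReducible_inv_swap_iff hξ, Set.mem_inter_iff, ← swap_mem_Gset_iff,
    ← swap_mem_U2_inv_iff hξ]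
  exact not_isReducible_iff_mem_Gset_inter_U2 (inv_nonneg.2 hξ.le) ((swap_mem_Uset_inv_iff hξ).2 hx)

end HalfPlanes

section Factorization

variable {p q : ℕ}

lemma cast_mul_log_lt_cast_mul_log_iff (hp : 0 < p) (hq : 0 < q) {m n : ℕ} :
    (m : ℝ) * log p < n * log q ↔ p ^ m < q ^ n := by
  rw [← Real.log_pow, ← Real.log_pow, Real.log_lt_log_iff (by positivity) (by positivity)]
  exact_mod_cast Iff.rfl

lemma mem_Uset_log_div_log_iff (hp : 1 < p) (hq : 0 < q) {x : ℕ × ℕ} :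
    x ∈ Uset (log q / log p) ↔ q ^ x.2 < p ^ x.1 := by
  rw [Uset, Set.mem_ofPred_eq, ← mul_div_assoc, div_lt_iff₀ (log_pos (by exact_mod_cast hp)),
    cast_mul_log_lt_cast_mul_log_iff hq (by omega), and_iff_right_iff_imp]
  rintro h rfl
  simp at h

lemma mem_Lset_log_div_log_iff (hp : 1 < p) (hq : 0 < q) {x : ℕ × ℕ} :
    x ∈ Lset (log q / log p) ↔ p ^ x.1 < q ^ x.2 := by
  rw [Lset, Set.mem_ofPred_eq, ← mul_div_assoc, lt_div_iff₀ (log_pos (by exact_mod_cast hp)),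
    cast_mul_log_lt_cast_mul_log_iff (by omega) hq, and_iff_right_iff_imp]
  rintro h rfl
  simp at h

lemma exists_pow_of_mul_eq_prime_pow (hp : p.Prime) {x y n : ℕ} (h : x * y = p ^ n) :
    ∃ i j, i + j = n ∧ x = p ^ i ∧ y = p ^ j := by
  obtain ⟨i, j, b, c, hij, hbc, rfl, rfl⟩ :=
    mul_eq_mul_prime_pow hp.prime (h.trans (one_mul _).symm)
  obtain ⟨rfl, rfl⟩ := mul_eq_one.1 hbc.symm
  exact ⟨i, j, hij, one_mul _, one_mul _⟩

lemma prod_eq_pow_of_isFactorization (hp : p.Prime) (hq : q.Prime) (hpq : p ≠ q)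
    {a b N : ℕ} {r s : Fin N → ℕ} (hf : IsFactorization ((p : ℚ) ^ a / (q : ℚ) ^ b) r s) :
    ∏ n, r n = p ^ a ∧ ∏ n, s n = q ^ b := by
  obtain ⟨-, hs, -, hcop, hprod⟩ := hf
  have := Rat.div_int_inj (a := ((∏ n, r n : ℕ) : ℤ)) (b := ((∏ n, s n : ℕ) : ℤ))
    (c := ((p ^ a : ℕ) : ℤ)) (d := ((q ^ b : ℕ) : ℤ))
    (by exact_mod_cast prod_pos fun n _ => hs n) (by exact_mod_cast pow_pos hq.pos b)
    (by
      rw [Int.natAbs_natCast, Int.natAbs_natCast]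
      exact Nat.Coprime.prod_left fun m _ => Nat.Coprime.prod_right fun n _ => hcop m n)
    (by
      rw [Int.natAbs_natCast, Int.natAbs_natCast]
      exact ((Nat.coprime_primes hp hq).2 hpq).pow a b)
    (by push_cast; rw [← prod_div_distrib, hprod])
  exact_mod_cast this

lemma isFactorization_pow_div_pow (hp : p.Prime) (hq : q.Prime) (hpq : p ≠ q) {y z : ℕ × ℕ}
    (hy : p ^ y.1 ≠ q ^ y.2) (hz : p ^ z.1 ≠ q ^ z.2) :
    IsFactorization ((p : ℚ) ^ (y + z).1 / (q : ℚ) ^ (y + z).2)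
      ![p ^ y.1, p ^ z.1] ![q ^ y.2, q ^ z.2] := by
  have hcop := (Nat.coprime_primes hp hq).2 hpq
  refine ⟨?_, ?_, ?_, ?_, ?_⟩
  · simp [Fin.forall_fin_two, hp.pos]
  · simp [Fin.forall_fin_two, hq.pos]
  · have hne : ∀ {m n : ℕ}, p ^ m ≠ q ^ n → ((p ^ m : ℕ) : ℚ) / ((q ^ n : ℕ) : ℚ) ≠ 1 :=
      fun {_ n} h => by
        rwa [Ne, div_eq_one_iff_eq (by exact_mod_cast (pow_pos hq.pos n).ne'), Nat.cast_inj]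
    simp only [Fin.forall_fin_two, Matrix.cons_val_zero, Matrix.cons_val_one]
    exact ⟨hne hy, hne hz⟩
  · simp only [Fin.forall_fin_two, Matrix.cons_val_zero, Matrix.cons_val_one]
    exact ⟨⟨hcop.pow _ _, hcop.pow _ _⟩, hcop.pow _ _, hcop.pow _ _⟩
  · simp [Fin.prod_univ_two, pow_add]

theorem exists_biased_factorization_of_isReducible (hp : p.Prime) (hq : q.Prime) (hpq : p ≠ q)
    {a b : ℕ} (h : IsReducible (log q / log p) (a, b)) :
    ∃ (N : ℕ) (r s : Fin N → ℕ), 2 ≤ N ∧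
      IsFactorization ((p : ℚ) ^ a / (q : ℚ) ^ b) r s ∧ Biased r s := by
  obtain ⟨y, z, hyz, h⟩ := h
  obtain ⟨rfl, rfl⟩ := Prod.ext_iff.1 hyz
  simp only [mem_Uset_log_div_log_iff hp.one_lt hq.pos,
    mem_Lset_log_div_log_iff hp.one_lt hq.pos] at h
  have hne : p ^ y.1 ≠ q ^ y.2 ∧ p ^ z.1 ≠ q ^ z.2 := by
    rcases h with ⟨hy, hz⟩ | ⟨hy, hz⟩
    exacts [⟨hy.ne', hz.ne'⟩, ⟨hy.ne, hz.ne⟩]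
  refine ⟨2, _, _, le_rfl, isFactorization_pow_div_pow hp hq hpq hne.1 hne.2, ?_⟩
  simpa [Biased, Fin.forall_fin_two] using h

theorem isReducible_of_biased_factorization (hp : p.Prime) (hq : q.Prime) (hpq : p ≠ q)
    {a b N : ℕ} {r s : Fin N → ℕ} (hN : 2 ≤ N)
    (hf : IsFactorization ((p : ℚ) ^ a / (q : ℚ) ^ b) r s) (hb : Biased r s) :
    IsReducible (log q / log p) (a, b) := by
  classical
  obtain ⟨hR, hS⟩ := prod_eq_pow_of_isFactorization hp hq hpq hf
  let i₀ : Fin N := ⟨0, by omega⟩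
  have hrest : (univ.erase i₀).Nonempty := by
    rw [← card_pos, card_erase_of_mem (mem_univ _), card_univ, Fintype.card_fin]
    omega
  rw [← mul_prod_erase univ r (mem_univ i₀)] at hR
  rw [← mul_prod_erase univ s (mem_univ i₀)] at hS
  obtain ⟨i, j, rfl, hri, hrj⟩ := exists_pow_of_mul_eq_prime_pow hp hR
  obtain ⟨k, l, rfl, hsk, hsl⟩ := exists_pow_of_mul_eq_prime_pow hq hS
  refine ⟨(i, k), (j, l), rfl, ?_⟩
  simp only [mem_Uset_log_div_log_iff hp.one_lt hq.pos, mem_Lset_log_div_log_iff hp.one_lt hq.pos]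
  rw [← hri, ← hrj, ← hsk, ← hsl]
  rcases hb with hb | hb
  · exact .inl ⟨hb i₀, prod_lt_prod_of_nonempty (fun n _ => hf.2.1 n) (fun n _ => hb n) hrest⟩
  · exact .inr ⟨hb i₀, prod_lt_prod_of_nonempty (fun n _ => hf.1 n) (fun n _ => hb n) hrest⟩

theorem noNontrivialBiased_iff_not_isReducible (hp : p.Prime) (hq : q.Prime) (hpq : p ≠ q)
    (a b : ℕ) :
    NoNontrivialBiased ((p : ℚ) ^ a / (q : ℚ) ^ b) ↔ ¬ IsReducible (log q / log p) (a, b) :=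
  not_congr ⟨fun ⟨_, _, _, hN, hf, hb⟩ => isReducible_of_biased_factorization hp hq hpq hN hf hb,
    exists_biased_factorization_of_isReducible hp hq hpq⟩

end Factorization

/-- Lemma `TotalBias`: for `(a,b) ∈ 𝒰(ξ)` the conditions (no non-trivial
biased factorization of `p^a/q^b`), (irreducibility of `(a,b)`), and
`(a,b) ∈ 𝒢 ∩ 𝒰₂(ξ)` are equivalent; similarly for `(a,b) ∈ ℒ(ξ)` with `𝒢 ∩ ℒ₁(ξ)`. -/
theorem stmt_14 (p q : ℕ) (hp : p.Prime) (hq : q.Prime) (hpq : p ≠ q)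
    (ξ : ℝ) (hξ : ξ = Real.log q / Real.log p) (a b : ℕ) :
    ((a, b) ∈ Uset ξ →
      ((NoNontrivialBiased ((p : ℚ) ^ a / (q : ℚ) ^ b) ↔ ¬ IsReducible ξ (a, b)) ∧
       (¬ IsReducible ξ (a, b) ↔ (a, b) ∈ Gset ∩ U2 ξ))) ∧
    ((a, b) ∈ Lset ξ →
      ((NoNontrivialBiased ((p : ℚ) ^ a / (q : ℚ) ^ b) ↔ ¬ IsReducible ξ (a, b)) ∧
       (¬ IsReducible ξ (a, b) ↔ (a, b) ∈ Gset ∩ L1 ξ))) := by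
  subst hξ
  have hξ : 0 < log q / log p :=
    div_pos (log_pos (by exact_mod_cast hq.one_lt)) (log_pos (by exact_mod_cast hp.one_lt))
  have hfac := noNontrivialBiased_iff_not_isReducible hp hq hpq a b
  exact ⟨fun hx => ⟨hfac, not_isReducible_iff_mem_Gset_inter_U2 hξ.le hx⟩,
    fun hx => ⟨hfac, not_isReducible_iff_mem_Gset_inter_L1 hξ hx⟩⟩
end

section
/- Let α ≠ 1 be a positive rational number, let A = (r₁/s₁,…,r_N/s_N) ∈ ℱ(α) be a factorization of α, and let t > 1 be a real number. If there exists n such that rₙ/sₙ has a non-trivial biased factorization, then there exists a factorization B ∈ ℱ(α) with f_B(t) < f_A(t); in particular, A does not attain the minimum of f over ℱ(α) at t. -/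
open Real Finset

/-!
Splitting the component `rₙ/sₙ` of `A` into a non-trivial biased factorization `(uⱼ/vⱼ)ⱼ`
again gives a factorization of `α`: coprimality forces `∏ uⱼ = rₙ` and `∏ vⱼ = sₙ`. Because the
splitting is biased, `max(rₙ, sₙ) = ∏ max(uⱼ, vⱼ)`, so `m(rₙ/sₙ) = ∑ⱼ m(uⱼ/vⱼ)` with at least two
positive summands, and for `t > 1` the map `x ↦ x ^ t` is strictly superadditive on such sums.
-/

theorem Real.sum_rpow_lt_rpow_sum {ι : Type*} [Fintype ι] (hι : 1 < Fintype.card ι)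
    {a : ι → ℝ} (ha : ∀ i, 0 < a i) {t : ℝ} (ht : 1 < t) :
    ∑ i, a i ^ t < (∑ i, a i) ^ t := by
  set S := ∑ i, a i
  have hne : (univ : Finset ι).Nonempty :=
    univ_nonempty_iff.mpr (Fintype.card_pos_iff.mp (by omega))
  have hS : 0 < S := sum_pos (fun i _ => ha i) hne
  have hlt : ∀ i, a i < S := fun i => by
    obtain ⟨j, hj⟩ := Fintype.exists_ne_of_one_lt_card hι i
    exact single_lt_sum hj (mem_univ i) (mem_univ j) (ha j) fun k _ _ => (ha k).le
  have hpow : ∀ {x : ℝ}, 0 < x → x ^ t = x ^ (t - 1) * x := fun hx => by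
    rw [← rpow_add_one hx.ne', sub_add_cancel]
  calc ∑ i, a i ^ t < ∑ i, S ^ (t - 1) * a i := by
        refine sum_lt_sum_of_nonempty hne fun i _ => ?_
        rw [hpow (ha i)]
        exact mul_lt_mul_of_pos_right (rpow_lt_rpow (ha i).le (hlt i) (by linarith)) (ha i)
    _ = S ^ t := by rw [← mul_sum, hpow hS]

namespace Fin

variable {α : Type*} {N M : ℕ}

def spliceAt (n : Fin (N + 1)) (r : Fin (N + 1) → α) (u : Fin M → α) : Fin (N + M) → α :=
  append (r ∘ n.succAbove) u

variable {n : Fin (N + 1)} {r : Fin (N + 1) → α} {u : Fin M → α}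

@[simp]
theorem spliceAt_castAdd (i : Fin N) : spliceAt n r u (castAdd M i) = r (n.succAbove i) :=
  append_left _ _ i

@[simp]
theorem spliceAt_natAdd (j : Fin M) : spliceAt n r u (natAdd N j) = u j :=
  append_right _ _ j

@[to_additive]
theorem prod_spliceAt {β : Type*} [CommMonoid β] (F : α → α → β) (s : Fin (N + 1) → α)
    (v : Fin M → α) :
    ∏ i, F (spliceAt n r u i) (spliceAt n s v i) =
      (∏ i, F (r (n.succAbove i)) (s (n.succAbove i))) * ∏ j, F (u j) (v j) := by
  simp [prod_univ_add]

end Fin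

section Factorization

variable {M : ℕ} {u v : Fin M → ℕ}

theorem IsFactorization.one_lt_max {q : ℚ} (h : IsFactorization q u v) (j : Fin M) :
    1 < max (u j) (v j) := by
  obtain ⟨hu, hv, hne, -⟩ := h
  have huv : u j ≠ v j := fun heq =>
    hne j (by rw [heq, div_self (by exact_mod_cast (hv j).ne')])
  have := hu j
  have := hv j
  omega

theorem IsFactorization.prod_eq {a b : ℕ} (hab : a.Coprime b) (hb : 0 < b)
    (h : IsFactorization ((a : ℚ) / b) u v) : ∏ j, u j = a ∧ ∏ j, v j = b := by
  obtain ⟨-, hv, -, hcop, hprod⟩ := h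
  have hcross : (∏ j, u j) * b = a * ∏ j, v j := by
    have hv' : ((∏ j, v j : ℕ) : ℚ) ≠ 0 := by exact_mod_cast (prod_pos fun j _ => hv j).ne'
    rw [prod_div_distrib] at hprod
    push_cast at hv'
    exact_mod_cast (div_eq_div_iff hv' (by exact_mod_cast hb.ne')).mp hprod
  have hcopP : (∏ j, u j).Coprime (∏ j, v j) :=
    Nat.Coprime.prod_left fun i _ => Nat.Coprime.prod_right fun j _ => hcop i j
  constructor
  · exact Nat.dvd_antisymm (hcopP.dvd_of_dvd_mul_right ⟨b, hcross.symm⟩)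
      (hab.dvd_of_dvd_mul_right ⟨_, hcross⟩)
  · exact Nat.dvd_antisymm (hcopP.symm.dvd_of_dvd_mul_right ⟨a, by linarith⟩)
      (hab.symm.dvd_of_dvd_mul_right ⟨∏ j, u j, by linarith⟩)

theorem Biased.prod_max (h : Biased u v) :
    ∏ j, max (u j) (v j) = max (∏ j, u j) (∏ j, v j) := by
  rcases h with h | h
  · rw [max_eq_left (prod_le_prod' fun j _ => (h j).le)]
    exact prod_congr rfl fun j _ => max_eq_left (h j).le
  · rw [max_eq_right (prod_le_prod' fun j _ => (h j).le)]
    exact prod_congr rfl fun j _ => max_eq_right (h j).le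

theorem IsFactorization.sum_log_max_rpow_lt {a b : ℕ} (hab : a.Coprime b) (hb : 0 < b)
    (h : IsFactorization ((a : ℚ) / b) u v) (hbias : Biased u v) (hM : 2 ≤ M) {t : ℝ}
    (ht : 1 < t) :
    ∑ j, Real.log ((max (u j) (v j) : ℕ) : ℝ) ^ t < Real.log ((max a b : ℕ) : ℝ) ^ t := by
  have hmax : ∏ j, max (u j) (v j) = max a b := by
    rw [hbias.prod_max, (h.prod_eq hab hb).1, (h.prod_eq hab hb).2]
  have hpos : ∀ j, (0 : ℝ) < max (u j) (v j) := fun j => by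
    exact_mod_cast (zero_lt_one.trans (h.one_lt_max j))
  calc ∑ j, Real.log ((max (u j) (v j) : ℕ) : ℝ) ^ t
      < (∑ j, Real.log ((max (u j) (v j) : ℕ) : ℝ)) ^ t :=
        Real.sum_rpow_lt_rpow_sum (by rw [Fintype.card_fin]; omega)
          (fun j => Real.log_pos (by exact_mod_cast h.one_lt_max j)) ht
    _ = Real.log ((max a b : ℕ) : ℝ) ^ t := by
        rw [← hmax, Nat.cast_prod, Real.log_prod fun j _ => (hpos j).ne']

variable {α : ℚ} {N : ℕ} {r s : Fin (N + 1) → ℕ} {n : Fin (N + 1)}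

theorem IsFactorization.spliceAt (hA : IsFactorization α r s)
    (hF : IsFactorization ((r n : ℚ) / s n) u v) :
    IsFactorization α (Fin.spliceAt n r u) (Fin.spliceAt n s v) := by
  obtain ⟨hr, hs, hne, hcop, hprod⟩ := hA
  obtain ⟨hu_prod, hv_prod⟩ := hF.prod_eq (hcop n n) (hs n)
  obtain ⟨hu, hv, hne', hcop', hprod'⟩ := hF
  refine ⟨?_, ?_, ?_, ?_, ?_⟩
  · simp [Fin.forall_fin_add, hr, hu]
  · simp [Fin.forall_fin_add, hs, hv]
  · simp only [Fin.forall_fin_add, Fin.spliceAt_castAdd, Fin.spliceAt_natAdd]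
    exact ⟨fun i => hne _, hne'⟩
  · simp only [Fin.forall_fin_add, Fin.spliceAt_castAdd, Fin.spliceAt_natAdd]
    refine ⟨fun i => ⟨fun i' => hcop _ _, fun j => ?_⟩, fun i => ⟨fun j => ?_, hcop' i⟩⟩
    · exact (hcop _ n).coprime_dvd_right (hv_prod ▸ dvd_prod_of_mem v (mem_univ j))
    · exact (hcop n _).coprime_dvd_left (hu_prod ▸ dvd_prod_of_mem u (mem_univ i))
  · refine (Fin.prod_spliceAt (fun a b : ℕ => (a : ℚ) / b) s v).trans ?_
    rw [hprod', ← hprod, Fin.prod_univ_succAbove _ n, mul_comm]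

theorem IsFactorization.fmeas_spliceAt_lt (hA : IsFactorization α r s)
    (hF : IsFactorization ((r n : ℚ) / s n) u v) (hbias : Biased u v) (hM : 2 ≤ M) {t : ℝ}
    (ht : 1 < t) : fmeas (Fin.spliceAt n r u) (Fin.spliceAt n s v) t < fmeas r s t := by
  obtain ⟨-, hs, -, hcop, -⟩ := hA
  refine rpow_lt_rpow (sum_nonneg fun i _ => rpow_nonneg (Real.log_natCast_nonneg _) _) ?_
    (by positivity)
  refine (Fin.sum_spliceAt (fun a b : ℕ => Real.log ((max a b : ℕ) : ℝ) ^ t) s v).trans_lt ?_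
  rw [Fin.sum_univ_succAbove _ n, add_comm]
  exact add_lt_add_left (hF.sum_log_max_rpow_lt (hcop n n) (hs n) hbias hM ht) _

end Factorization

theorem stmt_15_general (α : ℚ)
    (N : ℕ) (r s : Fin N → ℕ) (hA : IsFactorization α r s)
    (t : ℝ) (ht : 1 < t) (n : Fin N)
    (hbias : ∃ (M : ℕ) (u v : Fin M → ℕ), 2 ≤ M ∧
      IsFactorization ((r n : ℚ) / (s n : ℚ)) u v ∧ Biased u v) :
    ∃ (M : ℕ) (u v : Fin M → ℕ), IsFactorization α u v ∧
      fmeas u v t < fmeas r s t := by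
  obtain ⟨M, u, v, hM, hF, hb⟩ := hbias
  obtain ⟨N, rfl⟩ := Nat.exists_eq_add_one.mpr n.pos
  exact ⟨N + M, Fin.spliceAt n r u, Fin.spliceAt n s v, hA.spliceAt hF,
    hA.fmeas_spliceAt_lt hF hb hM ht⟩

/-- Lemma `Biased`: if some component `rₙ/sₙ` of a factorization `A` of
`α` has a non-trivial biased factorization and `t > 1`, then some factorization of `α`
has strictly smaller measure function at `t` than `A`. -/
theorem stmt_15 (α : ℚ) (hα : 0 < α) (hα1 : α ≠ 1)
    (N : ℕ) (r s : Fin N → ℕ) (hA : IsFactorization α r s)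
    (t : ℝ) (ht : 1 < t) (n : Fin N)
    (hbias : ∃ (M : ℕ) (u v : Fin M → ℕ), 2 ≤ M ∧
      IsFactorization ((r n : ℚ) / (s n : ℚ)) u v ∧ Biased u v) :
    ∃ (M : ℕ) (u v : Fin M → ℕ), IsFactorization α u v ∧
      fmeas u v t < fmeas r s t :=
  stmt_15_general α N r s hA t ht n hbias
end
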